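/- arXiv:1403.3635 — 6 statements merged into one kernel-verified Lean document; each statement's English description precedes it below -/
import Mathlib

section
/- Let 0 < q < 1 and λ > 0. For every z with -λ/2 < z ≤ λ/2, the integral ∫_{-z}^{λ/2} q·(λ/2 - t)^{q-1}·(z+t)^{q-1} dt is at most 2^{2-2q}·(z + λ/2)^{2q-1}. -/
open intervalIntegral MeasureTheory

/-!
Write the integrand as `(b - t) ^ p * (t - a) ^ p` with `p = q - 1 ∈ (-1, 0]`. The reflection
`t ↦ a + b - t` swaps the two halves of `[a, b]`, so the integral is twice the integral over
`[a, (a + b) / 2]`. There `b - t ≥ (b - a) / 2`, and `p ≤ 0` bounds `(b - t) ^ p` by its value at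
the midpoint; the remaining factor `(t - a) ^ p` integrates explicitly.
-/

section
variable {a b p : ℝ}

lemma integral_sub_rpow_half (hp : -1 < p) :
    ∫ t in a..(a + b) / 2, (t - a) ^ p = ((b - a) / 2) ^ (p + 1) / (p + 1) := by
  rw [integral_comp_sub_right (· ^ p), integral_rpow (Or.inl hp), sub_self,
    Real.zero_rpow (by linarith), sub_zero]
  congr 3; ring

lemma intervalIntegrable_sub_rpow (hp : -1 < p) {u v : ℝ} :
    IntervalIntegrable (fun t => (t - a) ^ p) volume u v := by
  simpa using (intervalIntegrable_rpow' (a := u - a) (b := v - a) hp).comp_sub_right a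

lemma intervalIntegrable_rpow_sub_mul_rpow_sub_left_half (hp : -1 < p) (hab : a < b) :
    IntervalIntegrable (fun t => (b - t) ^ p * (t - a) ^ p) volume a ((a + b) / 2) := by
  refine (intervalIntegrable_sub_rpow hp).continuousOn_mul
    (ContinuousOn.rpow_const (by fun_prop) fun t ht => Or.inl ?_)
  rw [Set.uIcc_of_le (by linarith)] at ht
  linarith [ht.2]

lemma integral_rpow_sub_mul_rpow_sub_right_half :
    ∫ t in (a + b) / 2..b, (b - t) ^ p * (t - a) ^ p =
      ∫ t in a..(a + b) / 2, (b - t) ^ p * (t - a) ^ p := by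
  have reflect := integral_comp_sub_left (fun t => (b - t) ^ p * (t - a) ^ p) (a + b)
    (a := (a + b) / 2) (b := b)
  rw [show a + b - b = a by ring, show a + b - (a + b) / 2 = (a + b) / 2 by ring] at reflect
  rw [← reflect]
  congr 1 with t
  rw [mul_comm]
  ring_nf

lemma integral_rpow_sub_mul_rpow_sub_le (hp : -1 < p) (hp0 : p ≤ 0) (hab : a < b) :
    ∫ t in a..b, (b - t) ^ p * (t - a) ^ p ≤ 2 * ((b - a) / 2) ^ (2 * p + 1) / (p + 1) := by
  have hleft := intervalIntegrable_rpow_sub_mul_rpow_sub_left_half hp hab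
  have hright :
      IntervalIntegrable (fun t => (b - t) ^ p * (t - a) ^ p) volume ((a + b) / 2) b := by
    have reflect := hleft.comp_sub_left (a + b)
    rw [show a + b - a = b by ring, show a + b - (a + b) / 2 = (a + b) / 2 by ring] at reflect
    convert reflect.symm using 1
    ext t
    rw [mul_comm]
    ring_nf
  have hhalf : ∫ t in a..(a + b) / 2, (b - t) ^ p * (t - a) ^ p ≤
      ((b - a) / 2) ^ (2 * p + 1) / (p + 1) := calc
    _ ≤ ∫ t in a..(a + b) / 2, ((b - a) / 2) ^ p * (t - a) ^ p := by
      refine integral_mono_on (by linarith) hleft ?_ fun t ht => ?_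
      · exact (intervalIntegrable_sub_rpow hp).const_mul _
      · exact mul_le_mul_of_nonneg_right
          (Real.rpow_le_rpow_of_nonpos (by linarith) (by linarith [ht.2]) hp0)
          (Real.rpow_nonneg (by linarith [ht.1]) _)
    _ = ((b - a) / 2) ^ (2 * p + 1) / (p + 1) := by
      rw [intervalIntegral.integral_const_mul, integral_sub_rpow_half hp, mul_div_assoc',
        ← Real.rpow_add (by linarith)]
      ring_nf
  rw [← integral_add_adjacent_intervals hleft hright, integral_rpow_sub_mul_rpow_sub_right_half,
    mul_div_assoc]
  linarith

lemma two_mul_half_rpow {x : ℝ} (hx : 0 ≤ x) (r : ℝ) :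
    2 * (x / 2) ^ r = 2 ^ (1 - r) * x ^ r := by
  rw [Real.div_rpow hx zero_le_two, Real.rpow_sub two_pos, Real.rpow_one]
  ring

end

theorem stmt_0_general (q lam : ℝ) (hq0 : 0 < q) (hq1 : q < 1)
    (z : ℝ) (hz1 : -lam/2 < z) :
    (∫ t in (-z)..(lam/2), q * (lam/2 - t) ^ (q-1) * (z + t) ^ (q-1)) ≤
      2 ^ ((2:ℝ) - 2*q) * (z + lam/2) ^ (2*q - 1) := by
  have key := integral_rpow_sub_mul_rpow_sub_le (a := -z) (b := lam / 2) (p := q - 1)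
    (by linarith) (by linarith) (by linarith)
  rw [sub_neg_eq_add, add_comm, sub_add_cancel, show 2 * (q - 1) + 1 = 2 * q - 1 by ring] at key
  calc (∫ t in (-z)..(lam/2), q * (lam/2 - t) ^ (q-1) * (z + t) ^ (q-1))
      = q * ∫ t in (-z)..(lam/2), (lam / 2 - t) ^ (q - 1) * (t - -z) ^ (q - 1) := by
        rw [← intervalIntegral.integral_const_mul]
        congr 1 with t
        rw [sub_neg_eq_add, add_comm t, mul_assoc]
    _ ≤ q * (2 * ((z + lam / 2) / 2) ^ (2 * q - 1) / q) := by gcongr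
    _ = 2 ^ ((2:ℝ) - 2*q) * (z + lam/2) ^ (2*q - 1) := by
      rw [mul_div_cancel₀ _ hq0.ne', two_mul_half_rpow (by linarith)]
      ring_nf

theorem stmt_0 (q lam : ℝ) (hq0 : 0 < q) (hq1 : q < 1) (hlam : 0 < lam)
    (z : ℝ) (hz1 : -lam/2 < z) (hz2 : z ≤ lam/2) :
    (∫ t in (-z)..(lam/2), q * (lam/2 - t) ^ (q-1) * (z + t) ^ (q-1)) ≤
      2 ^ ((2:ℝ) - 2*q) * (z + lam/2) ^ (2*q - 1) :=
  stmt_0_general q lam hq0 hq1 z hz1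
end

section
/- Let 0 < q < 1, λ > 0, and let G : [-λ/2, λ/2] → [0,1] be continuously differentiable. Define V(G)(z) := exp(-∫_{-λ/2}^{λ/2} q·((z+t)_+)^{q-1}·G(t) dt) for z ∈ [-λ/2, λ/2], where x_+ = max(x,0). Then V(G) is differentiable on (-λ/2, λ/2) with derivative (V(G))'(z) = -V(G)(z)·( G(λ/2)·q·(z+λ/2)^{q-1} - ∫_{-z}^{λ/2} q·(z+t)^{q-1}·G'(t) dt ). -/
/-!
Substituting `t = (y + b) r - y` (with `b = λ/2`) turns the exponent into
`∫₀¹ q r^(q-1) (y + b)^q G((y + b) r - y) dr`. The singularity of the kernel now sits at the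
fixed point `r = 0` and `y` enters only through smooth factors, so one may differentiate under
the integral sign with the integrable majorant `C r^(q-1)`. Integrating
`d/dr [r^q G((z + b) r - z)]` over `[0, 1]` (an integration by parts) and undoing the
substitution puts the derivative into the stated form.
-/

open Set MeasureTheory intervalIntegral
open scoped Interval

lemma add_mul_sub_mem_Icc {b y r : ℝ} (hy : y ∈ Icc (-b) b) (hr : r ∈ Icc 0 1) :
    (y + b) * r - y ∈ Icc (-b) b := by
  obtain ⟨hy1, hy2⟩ := hy
  obtain ⟨hr0, hr1⟩ := hr
  constructor <;> nlinarith

lemma add_mul_sub_mem_Ioo {b y r : ℝ} (hy : y ∈ Ioo (-b) b) (hr : r ∈ Ico 0 1) :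
    (y + b) * r - y ∈ Ioo (-b) b := by
  obtain ⟨hy1, hy2⟩ := hy
  obtain ⟨hr0, hr1⟩ := hr
  constructor <;> nlinarith

lemma rpow_sub_one_mul_self {r q : ℝ} (hr : 0 ≤ r) (hq : q ≠ 0) :
    r ^ (q - 1) * r = r ^ q := by
  simpa using (Real.rpow_add_one' (y := q - 1) hr (by simpa using hq)).symm

lemma intervalIntegrable_rpow_sub_one_mul {q : ℝ} (hq : 0 < q) {g : ℝ → ℝ}
    (hg : ContinuousOn g (Icc 0 1)) :
    IntervalIntegrable (fun r => q * r ^ (q - 1) * g r) volume 0 1 :=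
  ((intervalIntegral.intervalIntegrable_rpow' (by linarith)).const_mul q).mul_continuousOn
    (by rwa [uIcc_of_le zero_le_one])

lemma integral_max_rpow_sub_one_mul {q y a b : ℝ} (hq : q ≠ 1) (ha : a ≤ -y) (hb : -y ≤ b)
    {f : ℝ → ℝ}
    (hf : IntervalIntegrable (fun t => q * (y + t) ^ (q - 1) * f t) volume (-y) b) :
    ∫ t in a..b, q * max (y + t) 0 ^ (q - 1) * f t
      = ∫ t in (-y)..b, q * (y + t) ^ (q - 1) * f t := by
  have hzero : EqOn (fun t => q * max (y + t) 0 ^ (q - 1) * f t) 0 (uIcc a (-y)) := by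
    intro t ht
    rw [uIcc_of_le ha] at ht
    simp [max_eq_right (by linarith [ht.2] : y + t ≤ 0), Real.zero_rpow (sub_ne_zero.mpr hq)]
  have hpos : EqOn (fun t => q * max (y + t) 0 ^ (q - 1) * f t)
      (fun t => q * (y + t) ^ (q - 1) * f t) (uIcc (-y) b) := by
    intro t ht
    rw [uIcc_of_le hb] at ht
    simp only [max_eq_left (by linarith [ht.1] : 0 ≤ y + t)]
  rw [← integral_add_adjacent_intervals
      ((intervalIntegrable_const (c := (0:ℝ))).congr (hzero.symm.mono Ioc_subset_Icc_self))
      (hf.congr (hpos.symm.mono Ioc_subset_Icc_self)),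
    integral_congr hzero, integral_congr hpos]
  simp

lemma integral_rpow_sub_one_mul_eq_integral_zero_one {q b y : ℝ} (hq : 0 < q) (hy : 0 < y + b)
    (f : ℝ → ℝ) :
    ∫ t in (-y)..b, q * (y + t) ^ (q - 1) * f t
      = ∫ r in (0:ℝ)..1, q * r ^ (q - 1) * ((y + b) ^ q * f ((y + b) * r - y)) := by
  have hsub := smul_integral_comp_mul_sub (a := 0) (b := 1)
    (fun t => q * (y + t) ^ (q - 1) * f t) (y + b) y
  simp only [mul_zero, zero_sub, mul_one, add_sub_cancel_left, add_sub_cancel, smul_eq_mul]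
    at hsub
  rw [← hsub, ← intervalIntegral.integral_const_mul]
  refine integral_congr fun r hr => ?_
  rw [uIcc_of_le zero_le_one] at hr
  rw [Real.mul_rpow hy.le hr.1, ← rpow_sub_one_mul_self hy.le hq.ne']
  ring

section Rescaled

variable {q b z : ℝ} {G D : ℝ → ℝ}

lemma continuousOn_comp_add_mul_sub (hGc : ContinuousOn G (Icc (-b) b)) (hz : z ∈ Icc (-b) b) :
    ContinuousOn (fun r => G ((z + b) * r - z)) (Icc 0 1) :=
  hGc.comp (by fun_prop) fun _ hr => add_mul_sub_mem_Icc hz hr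

lemma hasDerivAt_rescaled_integrand (hGD : ∀ t ∈ Ioo (-b) b, HasDerivAt G (D t) t)
    {y r : ℝ} (hy : y ∈ Ioo (-b) b) (hr : r ∈ Ico 0 1) :
    HasDerivAt (fun y => q * r ^ (q - 1) * ((y + b) ^ q * G ((y + b) * r - y)))
      (q * r ^ (q - 1) * (q * (y + b) ^ (q - 1) * G ((y + b) * r - y)
        + (y + b) ^ q * (D ((y + b) * r - y) * (r - 1)))) y := by
  have hpow : HasDerivAt (fun y => (y + b) ^ q) (q * (y + b) ^ (q - 1)) y := by
    simpa using ((hasDerivAt_id' y).add_const b).rpow_const (p := q)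
      (Or.inl (by linarith [hy.1]))
  have hlin : HasDerivAt (fun y => (y + b) * r - y) (r - 1) y :=
    ((((hasDerivAt_id' y).add_const b).mul_const r).sub (hasDerivAt_id' y)).congr_deriv
      (by ring)
  have hG : HasDerivAt (fun y => G ((y + b) * r - y)) (D ((y + b) * r - y) * (r - 1)) y :=
    HasDerivAt.comp (h := fun y => (y + b) * r - y) y (hGD _ (add_mul_sub_mem_Ioo hy hr)) hlin
  exact (hpow.mul hG).const_mul _

lemma abs_rescaled_integrand_deriv_le (hq : 0 < q) (hq1 : q ≤ 1) {MG MD c y r : ℝ}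
    (hMG : ∀ x ∈ Icc (-b) b, |G x| ≤ MG) (hMD : ∀ x ∈ Icc (-b) b, |D x| ≤ MD)
    (hc : 0 < c) (hy : y ∈ Ioo (-b) b) (hcy : c ≤ y + b) (hr : r ∈ Ioo 0 1) :
    |q * r ^ (q - 1) * (q * (y + b) ^ (q - 1) * G ((y + b) * r - y)
        + (y + b) ^ q * (D ((y + b) * r - y) * (r - 1)))|
      ≤ q * r ^ (q - 1) * (q * c ^ (q - 1) * MG + (2 * b) ^ q * MD) := by
  have hx := Ioo_subset_Icc_self (add_mul_sub_mem_Ioo hy (Ioo_subset_Ico_self hr))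
  have hy0 : 0 < y + b := hc.trans_le hcy
  have hMD0 : 0 ≤ MD := (abs_nonneg _).trans (hMD _ hx)
  have hc1 : (y + b) ^ (q - 1) ≤ c ^ (q - 1) :=
    Real.rpow_le_rpow_of_nonpos hc hcy (by linarith)
  have hc2 : (y + b) ^ q ≤ (2 * b) ^ q :=
    Real.rpow_le_rpow hy0.le (by linarith [hy.2]) hq.le
  have hr1 : |r - 1| ≤ 1 := abs_le.mpr ⟨by linarith [hr.1], by linarith [hr.2]⟩
  have hqr : 0 ≤ q * r ^ (q - 1) := mul_nonneg hq.le (Real.rpow_nonneg hr.1.le _)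
  rw [abs_mul, abs_of_nonneg hqr]
  refine mul_le_mul_of_nonneg_left ?_ hqr
  calc _ ≤ |q * (y + b) ^ (q - 1) * G ((y + b) * r - y)|
        + |(y + b) ^ q * (D ((y + b) * r - y) * (r - 1))| := abs_add_le _ _
    _ = q * (y + b) ^ (q - 1) * |G ((y + b) * r - y)|
        + (y + b) ^ q * (|D ((y + b) * r - y)| * |r - 1|) := by
      rw [abs_mul, abs_mul, abs_mul, abs_mul, abs_of_pos hq,
        abs_of_nonneg (Real.rpow_nonneg hy0.le _), abs_of_nonneg (Real.rpow_nonneg hy0.le _)]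
    _ ≤ q * c ^ (q - 1) * MG + (2 * b) ^ q * (MD * 1) := by
      have hGx := hMG _ hx
      have hDx := hMD _ hx
      gcongr
      exact Real.rpow_nonneg (by linarith [hy.1, hy.2]) _
    _ = _ := by rw [mul_one]

lemma hasDerivAt_integral_rescaled (hq : 0 < q) (hq1 : q ≤ 1) (hGc : ContinuousOn G (Icc (-b) b))
    (hDc : ContinuousOn D (Icc (-b) b)) (hGD : ∀ t ∈ Ioo (-b) b, HasDerivAt G (D t) t)
    (hz : z ∈ Ioo (-b) b) :
    HasDerivAt (fun y => ∫ r in (0:ℝ)..1, q * r ^ (q - 1) * ((y + b) ^ q * G ((y + b) * r - y)))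
      (∫ r in (0:ℝ)..1, q * r ^ (q - 1) * (q * (z + b) ^ (q - 1) * G ((z + b) * r - z)
        + (z + b) ^ q * (D ((z + b) * r - z) * (r - 1)))) z := by
  have hzI := Ioo_subset_Icc_self hz
  obtain ⟨MG, hMG⟩ := isCompact_Icc.exists_bound_of_continuousOn hGc
  obtain ⟨MD, hMD⟩ := isCompact_Icc.exists_bound_of_continuousOn hDc
  set ε := min ((z + b) / 2) (b - z)
  have hε0 : 0 < ε := lt_min (by linarith [hz.1]) (by linarith [hz.2])
  have hball : ∀ y ∈ Metric.ball z ε, y ∈ Ioo (-b) b ∧ (z + b) / 2 ≤ y + b := by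
    intro y hy
    rw [Real.ball_eq_Ioo] at hy
    have h1 := min_le_left ((z + b) / 2) (b - z)
    have h2 := min_le_right ((z + b) / 2) (b - z)
    exact ⟨⟨by linarith [hy.1], by linarith [hy.2]⟩, by linarith [hy.1]⟩
  have hae : ∀ᵐ r ∂volume, r ∈ Ι (0:ℝ) 1 → r ∈ Ioo 0 1 := by
    filter_upwards [volume.ae_ne 1] with r hr1 hr
    rw [uIoc_of_le zero_le_one] at hr
    exact ⟨hr.1, lt_of_le_of_ne hr.2 hr1⟩
  have hint : ∀ y ∈ Icc (-b) b, IntervalIntegrable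
      (fun r => q * r ^ (q - 1) * ((y + b) ^ q * G ((y + b) * r - y))) volume 0 1 :=
    fun y hy => intervalIntegrable_rpow_sub_one_mul hq
      (continuousOn_const.mul (continuousOn_comp_add_mul_sub hGc hy))
  refine (intervalIntegral.hasDerivAt_integral_of_dominated_loc_of_deriv_le
    (F := fun y r => q * r ^ (q - 1) * ((y + b) ^ q * G ((y + b) * r - y)))
    (F' := fun y r => q * r ^ (q - 1) * (q * (y + b) ^ (q - 1) * G ((y + b) * r - y)
        + (y + b) ^ q * (D ((y + b) * r - y) * (r - 1))))
    (bound := fun r =>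
      q * r ^ (q - 1) * (q * ((z + b) / 2) ^ (q - 1) * MG + (2 * b) ^ q * MD))
    (Metric.ball_mem_nhds z hε0) ?_ (hint z hzI) ?_ ?_ ?_ ?_).2
  · filter_upwards [Metric.ball_mem_nhds z hε0] with y hy
    exact (hint y (Ioo_subset_Icc_self (hball y hy).1)).def'.aestronglyMeasurable
  · exact (intervalIntegrable_rpow_sub_one_mul hq
      ((continuousOn_const.mul (continuousOn_comp_add_mul_sub hGc hzI)).add (continuousOn_const.mul
        ((continuousOn_comp_add_mul_sub hDc hzI).mul (continuousOn_id.sub continuousOn_const)))))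
      |>.def'.aestronglyMeasurable
  · filter_upwards [hae] with r hr hrI y hy
    exact abs_rescaled_integrand_deriv_le hq hq1 (by simpa using hMG) (by simpa using hMD)
      (by linarith [hz.1]) (hball y hy).1 (hball y hy).2 (hr hrI)
  · exact intervalIntegrable_rpow_sub_one_mul hq continuousOn_const
  · filter_upwards [hae] with r hr hrI y hy
    exact hasDerivAt_rescaled_integrand hGD (hball y hy).1 (Ioo_subset_Ico_self (hr hrI))

lemma integral_rescaled_deriv_eq (hq : 0 < q) (hGc : ContinuousOn G (Icc (-b) b))
    (hDc : ContinuousOn D (Icc (-b) b)) (hGD : ∀ t ∈ Ioo (-b) b, HasDerivAt G (D t) t)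
    (hz : z ∈ Ioo (-b) b) :
    ∫ r in (0:ℝ)..1, q * r ^ (q - 1) * (q * (z + b) ^ (q - 1) * G ((z + b) * r - z)
        + (z + b) ^ q * (D ((z + b) * r - z) * (r - 1)))
      = q * (z + b) ^ (q - 1) * G b
        - ∫ r in (0:ℝ)..1, q * r ^ (q - 1) * ((z + b) ^ q * D ((z + b) * r - z)) := by
  have hzI := Ioo_subset_Icc_self hz
  have hz0 : 0 ≤ z + b := by linarith [hz.1]
  have hIG := intervalIntegrable_rpow_sub_one_mul hq (continuousOn_comp_add_mul_sub hGc hzI)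
  have hID : IntervalIntegrable
      (fun r => q * r ^ (q - 1) * ((z + b) ^ q * D ((z + b) * r - z))) volume 0 1 :=
    intervalIntegrable_rpow_sub_one_mul hq
      (continuousOn_const.mul (continuousOn_comp_add_mul_sub hDc hzI))
  have hcont : ContinuousOn (fun r : ℝ => r ^ q * ((z + b) * D ((z + b) * r - z))) (Icc 0 1) :=
    (Real.continuous_rpow_const hq.le).continuousOn.mul
      (continuousOn_const.mul (continuousOn_comp_add_mul_sub hDc hzI))
  have hparts : ∫ r in (0:ℝ)..1,
      (q * r ^ (q - 1) * G ((z + b) * r - z) + r ^ q * ((z + b) * D ((z + b) * r - z))) = G b := by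
    rw [integral_eq_sub_of_hasDerivAt_of_le zero_le_one
      ((Real.continuous_rpow_const hq.le).continuousOn.mul (continuousOn_comp_add_mul_sub hGc hzI))
      (fun r hr => ?_) (hIG.add (hcont.intervalIntegrable_of_Icc zero_le_one))]
    · simp [Real.zero_rpow hq.ne']
    · have hlin : HasDerivAt (fun r => (z + b) * r - z) (z + b) r := by
        simpa using ((hasDerivAt_id' r).const_mul (z + b)).sub_const z
      have hG := (hGD _ (add_mul_sub_mem_Ioo hz (Ioo_subset_Ico_self hr))).comp r hlin
      exact ((Real.hasDerivAt_rpow_const (Or.inl hr.1.ne')).mul hG).congr_deriv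
        (by simp only [Function.comp_apply]; ring)
  calc _ = ∫ r in (0:ℝ)..1, (q * (z + b) ^ (q - 1) *
          (q * r ^ (q - 1) * G ((z + b) * r - z) + r ^ q * ((z + b) * D ((z + b) * r - z)))
        - q * r ^ (q - 1) * ((z + b) ^ q * D ((z + b) * r - z))) := by
        refine integral_congr fun r hr => ?_
        rw [uIcc_of_le zero_le_one] at hr
        rw [← rpow_sub_one_mul_self hr.1 hq.ne', ← rpow_sub_one_mul_self hz0 hq.ne']
        ring
    _ = _ := by
      rw [integral_sub ((hIG.add (hcont.intervalIntegrable_of_Icc zero_le_one)).const_mul _) hID,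
        intervalIntegral.integral_const_mul, hparts]

end Rescaled

theorem hasDerivAt_integral_max_rpow_sub_one_mul {q b z : ℝ} {G D : ℝ → ℝ} (hq0 : 0 < q)
    (hq1 : q < 1) (hGc : ContinuousOn G (Icc (-b) b)) (hDc : ContinuousOn D (Icc (-b) b))
    (hGD : ∀ t ∈ Ioo (-b) b, HasDerivAt G (D t) t) (hz : z ∈ Ioo (-b) b) :
    HasDerivAt (fun y => ∫ t in (-b)..b, q * max (y + t) 0 ^ (q - 1) * G t)
      (G b * q * (z + b) ^ (q - 1) - ∫ t in (-z)..b, q * (z + t) ^ (q - 1) * D t) z := by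
  have hrescale : ∀ y ∈ Ioo (-b) b, ∫ t in (-b)..b, q * max (y + t) 0 ^ (q - 1) * G t
      = ∫ r in (0:ℝ)..1, q * r ^ (q - 1) * ((y + b) ^ q * G ((y + b) * r - y)) := by
    intro y hy
    have hy0 : 0 < y + b := by linarith [hy.1]
    have hint : IntervalIntegrable (fun t => q * (y + t) ^ (q - 1) * G t) volume (-y) b := by
      have h := (intervalIntegral.intervalIntegrable_rpow' (a := 0) (b := y + b)
        (r := q - 1) (by linarith)).comp_add_left y
      rw [zero_sub, add_sub_cancel_left] at h
      refine (h.const_mul q).mul_continuousOn (hGc.mono ?_)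
      rw [uIcc_of_le (by linarith [hy.2])]
      exact Icc_subset_Icc_left (by linarith [hy.2])
    rw [integral_max_rpow_sub_one_mul hq1.ne (by linarith [hy.2]) (by linarith [hy.1]) hint,
      integral_rpow_sub_one_mul_eq_integral_zero_one hq0 hy0]
  have hderiv := (hasDerivAt_integral_rescaled hq0 hq1.le hGc hDc hGD hz).congr_of_eventuallyEq
    (Filter.eventually_of_mem (Ioo_mem_nhds hz.1 hz.2) hrescale)
  refine hderiv.congr_deriv ?_
  rw [integral_rescaled_deriv_eq hq0 hGc hDc hGD hz,
    integral_rpow_sub_one_mul_eq_integral_zero_one hq0 (by linarith [hz.1])]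
  ring

theorem stmt_1_general (q lam : ℝ) (hq0 : 0 < q) (hq1 : q < 1)
    (G : ℝ → ℝ)
    (hG : ContDiffOn ℝ 1 G (Set.Icc (-lam/2) (lam/2)))
    (z : ℝ) (hz : z ∈ Set.Ioo (-lam/2) (lam/2)) :
    HasDerivAt
      (fun y => Real.exp (-(∫ t in (-lam/2)..(lam/2), q * (max (y + t) 0) ^ (q-1) * G t)))
      (-(Real.exp (-(∫ t in (-lam/2)..(lam/2), q * (max (z + t) 0) ^ (q-1) * G t))) *
        (G (lam/2) * q * (z + lam/2) ^ (q-1)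
          - ∫ t in (-z)..(lam/2), q * (z + t) ^ (q-1) * deriv G t)) z := by
  rw [neg_div] at hG hz ⊢
  set b := lam / 2
  have hGD : ∀ t ∈ Ioo (-b) b, HasDerivAt G (derivWithin G (Icc (-b) b) t) t := fun t ht => by
    rw [derivWithin_of_mem_nhds (Icc_mem_nhds ht.1 ht.2)]
    exact ((hG.differentiableOn one_ne_zero t (Ioo_subset_Icc_self ht)).differentiableAt
      (Icc_mem_nhds ht.1 ht.2)).hasDerivAt
  have hderiv := hasDerivAt_integral_max_rpow_sub_one_mul hq0 hq1 hG.continuousOn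
    (hG.continuousOn_derivWithin (uniqueDiffOn_Icc (hz.1.trans hz.2)) le_rfl) hGD hz
  have hderivWithin : ∫ t in (-z)..b, q * (z + t) ^ (q - 1) * derivWithin G (Icc (-b) b) t
      = ∫ t in (-z)..b, q * (z + t) ^ (q - 1) * deriv G t := by
    refine integral_congr_uIoo fun t ht => ?_
    rw [uIoo_of_le (by linarith [hz.1])] at ht
    rw [derivWithin_of_mem_nhds (Icc_mem_nhds (by linarith [ht.1, hz.2]) ht.2)]
  rw [hderivWithin] at hderiv
  exact hderiv.neg.exp.congr_deriv (by rw [Pi.neg_apply]; ring)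

theorem stmt_1 (q lam : ℝ) (hq0 : 0 < q) (hq1 : q < 1) (hlam : 0 < lam)
    (G : ℝ → ℝ)
    (hG : ContDiffOn ℝ 1 G (Set.Icc (-lam/2) (lam/2)))
    (hGval : ∀ t ∈ Set.Icc (-lam/2) (lam/2), G t ∈ Set.Icc (0:ℝ) 1)
    (z : ℝ) (hz : z ∈ Set.Ioo (-lam/2) (lam/2)) :
    HasDerivAt
      (fun y => Real.exp (-(∫ t in (-lam/2)..(lam/2), q * (max (y + t) 0) ^ (q-1) * G t)))
      (-(Real.exp (-(∫ t in (-lam/2)..(lam/2), q * (max (z + t) 0) ^ (q-1) * G t))) *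
        (G (lam/2) * q * (z + lam/2) ^ (q-1)
          - ∫ t in (-z)..(lam/2), q * (z + t) ^ (q-1) * deriv G t)) z :=
  stmt_1_general q lam hq0 hq1 G hG z hz
end

section
/- Let 0 < q < 1, λ > 0, and let g(z) := (λ/2 - |z|)^{q-1} for |z| < λ/2. There exists a constant a > 0 (depending only on q and λ) such that: for every non-increasing C¹ function G : [-λ/2, λ/2] → [0,1] with -G'(z) ≤ a·g(z) for all |z| < λ/2, the function V(G)(z) := exp(-∫_{-λ/2}^{λ/2} q·((z+t)_+)^{q-1}·G(t) dt) satisfies -(V(G))'(z) ≤ a·g(z) for all |z| < λ/2. -/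
open intervalIntegral

/-!
Write `V(G) = exp (-W)` with `W(y) = ∫ q (y + t)₊^(q-1) G(t) dt`. Since `W ≥ 0` and `exp (-·)` is
1-Lipschitz on `[0, ∞)`, it suffices to bound the right difference quotients of `W` at `z` by
`a g(z)`. After substituting `s = y + t`, with `b = z + λ/2`, the difference `W(z+h) - W(z)` is a
boundary term over `[b, b + h]` plus `∫₀ᵇ q s^(q-1) Δ(s) ds`, where the increment
`Δ(s) = G(s - z - h) - G(s - z)` is nonnegative, has integral at most `h` over every interval, and
is at most `2 a h dist^(q-1)` by the bound on `G'`. Where the kernel `q s^(q-1)` is at most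
`q r^(q-1)` the integral bound on `Δ` is used; near `s = 0` and `s = b` the two singular factors
integrate to `O(a h g(z) r^q)`. Taking `r^q = 1/16` makes this at most `a g(z) h / 2`, which leaves
room for the remaining terms, none of which involve `a`.
-/

open MeasureTheory Set Filter Topology

theorem rpow_le_two_mul_rpow {q x m : ℝ} (hq0 : 0 ≤ q) (hq1 : q ≤ 1) (hm : 0 < m)
    (hx : m / 2 ≤ x) : x ^ (q - 1) ≤ 2 * m ^ (q - 1) := by
  have h2 : (2 : ℝ) ^ (1 - q) ≤ 2 := by
    simpa using Real.rpow_le_rpow_of_exponent_le one_le_two (by linarith : 1 - q ≤ 1)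
  calc x ^ (q - 1) ≤ (m / 2) ^ (q - 1) :=
        Real.rpow_le_rpow_of_nonpos (by positivity) hx (by linarith)
    _ = 2 ^ (1 - q) * m ^ (q - 1) := by
        rw [Real.div_rpow hm.le zero_le_two, div_eq_mul_inv, ← Real.rpow_neg zero_le_two,
          neg_sub, mul_comm]
    _ ≤ 2 * m ^ (q - 1) := by gcongr

theorem rpow_le_div_rpow_mul_rpow {q r L x : ℝ} (hq : q ≤ 1) (hr : 0 < r) (hx : 0 < x)
    (hxL : x ≤ L) : r ^ (q - 1) ≤ (r / L) ^ (q - 1) * x ^ (q - 1) := by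
  have hL : 0 < L := hx.trans_le hxL
  rw [← Real.mul_rpow (by positivity) hx.le]
  refine Real.rpow_le_rpow_of_nonpos (by positivity) ?_ (by linarith)
  rw [div_mul_eq_mul_div, div_le_iff₀ hL]
  gcongr

theorem exp_neg_sub_exp_neg_le {x y c : ℝ} (hx : 0 ≤ x) (hc : 0 ≤ c) (hyx : y - x ≤ c) :
    Real.exp (-x) - Real.exp (-y) ≤ c := by
  rcases le_total y x with hxy | hxy
  · have := Real.exp_le_exp.2 (neg_le_neg hxy)
    linarith
  · have h1 := Real.add_one_le_exp (x - y)
    have h2 : Real.exp (-y) = Real.exp (-x) * Real.exp (x - y) := by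
      rw [← Real.exp_add]; ring_nf
    have h3 : Real.exp (-x) ≤ 1 := Real.exp_le_one_iff.2 (by linarith)
    nlinarith [Real.exp_pos (-x)]

theorem neg_deriv_le_of_eventually_sub_le {f : ℝ → ℝ} {z C : ℝ} (hC : 0 ≤ C)
    (h : ∀ᶠ y in 𝓝[>] z, f z - f y ≤ C * (y - z)) : -deriv f z ≤ C := by
  by_cases hf : DifferentiableAt ℝ f z
  · have hslope : Tendsto (slope f z) (𝓝[>] z) (𝓝 (deriv f z)) :=
      (hasDerivAt_iff_tendsto_slope_left_right.1 hf.hasDerivAt).2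
    have : -C ≤ deriv f z := by
      refine ge_of_tendsto hslope ?_
      filter_upwards [h, self_mem_nhdsWithin] with y hy (hzy : z < y)
      rw [slope_def_field, le_div_iff₀ (sub_pos.2 hzy)]
      linarith
    linarith
  · simpa [deriv_zero_of_not_differentiableAt hf] using hC

theorem integral_kernel {q α β : ℝ} (hq : 0 < q) :
    ∫ s in α..β, q * s ^ (q - 1) = β ^ q - α ^ q := by
  rw [intervalIntegral.integral_const_mul, integral_rpow (Or.inl (by linarith)), sub_add_cancel]
  field_simp

theorem intervalIntegrable_kernel_mul {q α β : ℝ} {φ : ℝ → ℝ} (hq : 0 < q) (hαβ : α ≤ β)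
    (hφ : ContinuousOn φ (Icc α β)) :
    IntervalIntegrable (fun s => q * s ^ (q - 1) * φ s) volume α β :=
  ((intervalIntegrable_rpow' (by linarith)).const_mul q).mul_continuousOn
    (by rwa [uIcc_of_le hαβ])

theorem integral_kernel_mul_le {q c M : ℝ} {D : ℝ → ℝ} (hq : 0 < q) (hc : 0 ≤ c)
    (hD : ContinuousOn D (Icc 0 c)) (hDM : ∀ s ∈ Icc 0 c, D s ≤ M) :
    ∫ s in 0..c, q * s ^ (q - 1) * D s ≤ M * c ^ q := by
  calc ∫ s in 0..c, q * s ^ (q - 1) * D s ≤ ∫ s in 0..c, q * s ^ (q - 1) * M :=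
        integral_mono_on hc (intervalIntegrable_kernel_mul hq hc hD)
          (intervalIntegrable_kernel_mul hq hc continuousOn_const) fun s hs =>
          mul_le_mul_of_nonneg_left (hDM s hs) (by have := hs.1; positivity)
    _ = M * c ^ q := by
        rw [intervalIntegral.integral_mul_const, integral_kernel hq, Real.zero_rpow hq.ne']
        ring

theorem integral_kernel_mul_le_mul_integral {q c d : ℝ} {D : ℝ → ℝ} (hq0 : 0 < q)
    (hq1 : q ≤ 1) (hc : 0 < c) (hcd : c ≤ d) (hD : ContinuousOn D (Icc c d))
    (hD0 : ∀ s ∈ Icc c d, 0 ≤ D s) :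
    ∫ s in c..d, q * s ^ (q - 1) * D s ≤ q * c ^ (q - 1) * ∫ s in c..d, D s := by
  rw [← intervalIntegral.integral_const_mul]
  refine integral_mono_on hcd (intervalIntegrable_kernel_mul hq0 hcd hD)
    ((hD.intervalIntegrable_of_Icc hcd).const_mul _) fun s hs => ?_
  have : s ^ (q - 1) ≤ c ^ (q - 1) := Real.rpow_le_rpow_of_nonpos hc hs.1 (by linarith)
  have := hD0 s hs
  gcongr

theorem integral_kernel_mul_le_of_mem_Icc {q c d : ℝ} {φ : ℝ → ℝ} (hq0 : 0 < q) (hq1 : q ≤ 1)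
    (hc : 0 < c) (hcd : c ≤ d) (hφ : ContinuousOn φ (Icc c d))
    (hφ01 : ∀ s ∈ Icc c d, φ s ∈ Icc (0 : ℝ) 1) :
    ∫ s in c..d, q * s ^ (q - 1) * φ s ≤ q * c ^ (q - 1) * (d - c) := by
  have hint : ∫ s in c..d, φ s ≤ d - c := by
    calc _ ≤ ∫ s in c..d, (1 : ℝ) :=
          integral_mono_on hcd (hφ.intervalIntegrable_of_Icc hcd) intervalIntegrable_const
            fun s hs => (hφ01 s hs).2
      _ = d - c := by simp
  calc _ ≤ q * c ^ (q - 1) * ∫ s in c..d, φ s :=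
        integral_kernel_mul_le_mul_integral hq0 hq1 hc hcd hφ fun s hs => (hφ01 s hs).1
    _ ≤ q * c ^ (q - 1) * (d - c) := by gcongr

theorem integral_kernel_mul_le_of_le_rpow_sub {q b c d M : ℝ} {D : ℝ → ℝ} (hq0 : 0 < q)
    (hq1 : q ≤ 1) (hb : 0 < b) (hM : 0 ≤ M) (hbc : b / 2 ≤ c) (hcd : c ≤ d) (hdb : d ≤ b)
    (hD : ContinuousOn D (Icc c d)) (hDM : ∀ s ∈ Icc c d, D s ≤ M * (b - s) ^ (q - 1)) :
    ∫ s in c..d, q * s ^ (q - 1) * D s ≤ 2 * b ^ (q - 1) * M * (b - c) ^ q := by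
  have hkernel : IntervalIntegrable (fun s => q * (b - s) ^ (q - 1)) volume c d := by
    simpa using ((intervalIntegrable_rpow' (r := q - 1) (a := b - c) (b := b - d)
      (by linarith)).const_mul q).comp_sub_left b
  calc ∫ s in c..d, q * s ^ (q - 1) * D s
      ≤ ∫ s in c..d, 2 * b ^ (q - 1) * M * (q * (b - s) ^ (q - 1)) := by
        refine integral_mono_on hcd (intervalIntegrable_kernel_mul hq0 hcd hD)
          (hkernel.const_mul _) fun s hs => ?_
        have hs0 : 0 < s := by linarith [hs.1]
        have h1 := hDM s hs
        have h2 := rpow_le_two_mul_rpow hq0.le hq1 hb (hbc.trans hs.1)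
        have h3 : 0 ≤ (b - s) ^ (q - 1) := Real.rpow_nonneg (by linarith [hs.2]) _
        calc q * s ^ (q - 1) * D s ≤ q * s ^ (q - 1) * (M * (b - s) ^ (q - 1)) := by gcongr
          _ ≤ q * (2 * b ^ (q - 1)) * (M * (b - s) ^ (q - 1)) := by gcongr
          _ = _ := by ring
    _ = 2 * b ^ (q - 1) * M * ((b - c) ^ q - (b - d) ^ q) := by
        rw [intervalIntegral.integral_const_mul, intervalIntegral.integral_comp_sub_left
          (fun s => q * s ^ (q - 1)), integral_kernel hq0]
    _ ≤ 2 * b ^ (q - 1) * M * (b - c) ^ q := by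
        have := Real.rpow_nonneg (sub_nonneg.2 hdb) q
        have := Real.rpow_nonneg hb.le (q - 1)
        gcongr
        linarith

theorem sub_le_of_neg_deriv_le_rpow {q L a : ℝ} {G : ℝ → ℝ} (hq0 : 0 ≤ q) (hq1 : q ≤ 1)
    (ha : 0 ≤ a) (hGc : ContinuousOn G (Icc (-L) L)) (hGd : DifferentiableOn ℝ G (Ioo (-L) L))
    (hG' : ∀ x, |x| < L → -deriv G x ≤ a * (L - |x|) ^ (q - 1))
    {x h m : ℝ} (hh : 0 < h) (hhm : 2 * h ≤ m) (hm : m ≤ L - |x|) :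
    G (x - h) - G x ≤ 2 * a * h * m ^ (q - 1) := by
  have hx := abs_le.1 (le_refl |x|)
  have hsub : Icc (x - h) x ⊆ Icc (-L) L := fun y hy => ⟨by linarith [hy.1], by linarith [hy.2]⟩
  have hsub' : Ioo (x - h) x ⊆ Ioo (-L) L := fun y hy => ⟨by linarith [hy.1], by linarith [hy.2]⟩
  have hderiv : ∀ y ∈ interior (Icc (x - h) x), -(2 * a * m ^ (q - 1)) ≤ deriv G y := by
    rw [interior_Icc]
    intro y hy
    have hy' : m / 2 ≤ L - |y| := by
      have h1 := abs_sub_abs_le_abs_sub y x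
      have h2 : |y - x| < h := abs_sub_lt_iff.2 ⟨by linarith [hy.2], by linarith [hy.1]⟩
      linarith
    have := hG' y (by linarith)
    have := rpow_le_two_mul_rpow hq0 hq1 (by linarith) hy'
    nlinarith
  have := (convex_Icc (x - h) x).mul_sub_le_image_sub_of_le_deriv (hGc.mono hsub)
    (by rw [interior_Icc]; exact hGd.mono hsub') hderiv
    (x - h) ⟨le_rfl, by linarith⟩ x ⟨by linarith, le_rfl⟩ (by linarith)
  linarith

theorem integral_sub_comp_sub_le {G : ℝ → ℝ} {α β y h : ℝ} (hαβ : α ≤ β) (hh : 0 ≤ h)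
    (hGc : ContinuousOn G (Icc (α - (y + h)) (β - y)))
    (hG : ∀ t ∈ Icc (α - (y + h)) (β - y), G t ∈ Icc (0 : ℝ) 1) :
    ∫ s in α..β, (G (s - (y + h)) - G (s - y)) ≤ h := by
  have hi : ∀ u v, α - (y + h) ≤ u → u ≤ v → v ≤ β - y → IntervalIntegrable G volume u v :=
    fun u v hu huv hv => (hGc.mono (Icc_subset_Icc hu hv)).intervalIntegrable_of_Icc huv
  have hshift : ∀ w, α - (y + h) ≤ α - w → β - w ≤ β - y →
      IntervalIntegrable (fun s => G (s - w)) volume α β := fun w h1 h2 => by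
    simpa using (hi (α - w) (β - w) h1 (by linarith) h2).comp_sub_right w
  have hfirst : ∫ t in (α - (y + h))..(α - y), G t ≤ h := by
    calc ∫ t in (α - (y + h))..(α - y), G t ≤ ∫ t in (α - (y + h))..(α - y), (1 : ℝ) :=
          integral_mono_on (by linarith) (hi _ _ le_rfl (by linarith) (by linarith))
            intervalIntegrable_const fun t ht => (hG t ⟨ht.1, by linarith [ht.2]⟩).2
      _ = h := by simp
  have hlast : 0 ≤ ∫ t in (β - (y + h))..(β - y), G t :=
    intervalIntegral.integral_nonneg (by linarith) fun t ht =>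
      (hG t ⟨by linarith [ht.1], ht.2⟩).1
  rw [intervalIntegral.integral_sub (hshift _ le_rfl (by linarith)) (hshift _ (by linarith) le_rfl),
    intervalIntegral.integral_comp_sub_right, intervalIntegral.integral_comp_sub_right,
    integral_interval_sub_interval_comm (hi _ _ le_rfl (by linarith) (by linarith))
      (hi _ _ (by linarith) (by linarith) le_rfl) (hi _ _ le_rfl (by linarith) (by linarith))]
  linarith

theorem continuousOn_comp_sub_of_Icc {G : ℝ → ℝ} {L α β w : ℝ} (hG : ContinuousOn G (Icc (-L) L))
    (hα : -L ≤ α - w) (hβ : β - w ≤ L) : ContinuousOn (fun s => G (s - w)) (Icc α β) :=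
  hG.comp (continuousOn_id.sub continuousOn_const) fun s hs =>
    ⟨by linarith [hs.1], by linarith [hs.2]⟩

/-- The exponent `W(G)` of `V(G) = exp (-W(G))`, with `L = λ/2`. -/
noncomputable def potential (q L : ℝ) (G : ℝ → ℝ) (y : ℝ) : ℝ :=
  ∫ t in (-L)..L, q * (max (y + t) 0) ^ (q - 1) * G t

theorem potential_nonneg {q L y : ℝ} {G : ℝ → ℝ} (hq : 0 ≤ q) (hL : 0 ≤ L)
    (hG : ∀ t ∈ Icc (-L) L, 0 ≤ G t) : 0 ≤ potential q L G y :=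
  intervalIntegral.integral_nonneg (by linarith) fun t ht => by
    have := hG t ht
    have := Real.rpow_nonneg (le_max_right (y + t) 0) (q - 1)
    positivity

theorem potential_eq_integral {q L y : ℝ} {G : ℝ → ℝ} (hq : q ≠ 1) (hy : |y| ≤ L) :
    potential q L G y = ∫ s in 0..(y + L), q * s ^ (q - 1) * G (s - y) := by
  obtain ⟨hy1, hy2⟩ := abs_le.1 hy
  set f := fun s => q * (max s 0) ^ (q - 1) * G (s - y)
  have hvanish : ∀ s ∈ Ioc (y + -L) (y + L) \ Ioc 0 (y + L), f s = 0 := fun s hs => by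
    have hs0 : s ≤ 0 := by
      by_contra h
      exact hs.2 ⟨not_le.1 h, hs.1.2⟩
    simp [f, max_eq_right hs0, Real.zero_rpow (sub_ne_zero.2 hq)]
  calc potential q L G y = ∫ t in (-L)..L, f (y + t) := by simp only [f, add_sub_cancel_left]; rfl
    _ = ∫ s in (y + -L)..(y + L), f s := intervalIntegral.integral_comp_add_left f y
    _ = ∫ s in 0..(y + L), f s := by
        rw [intervalIntegral.integral_of_le (by linarith), intervalIntegral.integral_of_le
          (by linarith), setIntegral_eq_of_subset_of_forall_sdiff_eq_zero measurableSet_Ioc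
          (Ioc_subset_Ioc_left (by linarith)) hvanish]
    _ = ∫ s in 0..(y + L), q * s ^ (q - 1) * G (s - y) :=
        intervalIntegral.integral_congr fun s hs => by
          rw [uIcc_of_le (by linarith)] at hs
          simp only [f, max_eq_left hs.1]

theorem potential_add_sub_potential {q L z h : ℝ} {G : ℝ → ℝ} (hq0 : 0 < q) (hq1 : q ≠ 1)
    (hGc : ContinuousOn G (Icc (-L) L)) (hz : -L ≤ z) (hh : 0 ≤ h) (hzh : z + h ≤ L) :
    potential q L G (z + h) - potential q L G z =
      (∫ s in (z + L)..(z + h + L), q * s ^ (q - 1) * G (s - (z + h))) +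
        ∫ s in 0..(z + L), q * s ^ (q - 1) * (G (s - (z + h)) - G (s - z)) := by
  have hi : ∀ α β w, α ≤ β → -L ≤ α - w → β - w ≤ L →
      IntervalIntegrable (fun s => q * s ^ (q - 1) * G (s - w)) volume α β :=
    fun α β w hαβ hα hβ => intervalIntegrable_kernel_mul hq0 hαβ
      (continuousOn_comp_sub_of_Icc hGc hα hβ)
  have hsplit : ∫ s in 0..(z + L), q * s ^ (q - 1) * (G (s - (z + h)) - G (s - z)) =
      (∫ s in 0..(z + L), q * s ^ (q - 1) * G (s - (z + h))) -
        ∫ s in 0..(z + L), q * s ^ (q - 1) * G (s - z) := by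
    simp only [mul_sub]
    exact intervalIntegral.integral_sub (hi _ _ _ (by linarith) (by linarith) (by linarith))
      (hi _ _ _ (by linarith) (by linarith) (by linarith))
  rw [potential_eq_integral hq1 (abs_le.2 ⟨by linarith, hzh⟩),
    potential_eq_integral hq1 (abs_le.2 ⟨hz, by linarith⟩), hsplit,
    ← integral_add_adjacent_intervals (hi 0 (z + L) _ (by linarith) (by linarith) (by linarith))
      (hi (z + L) (z + h + L) _ (by linarith) (by linarith) (by linarith))]
  ring

theorem integral_kernel_mul_le_of_increment_bounds {q a r b g h : ℝ} {D : ℝ → ℝ} (hq0 : 0 < q)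
    (hq1 : q ≤ 1) (ha : 0 ≤ a) (hh : 0 < h) (hbh : 8 * h ≤ b) (hrh : 4 * h ≤ r)
    (hbg : b ^ (q - 1) ≤ g) (hD : ContinuousOn D (Icc 0 b)) (hD0 : ∀ s ∈ Icc 0 b, 0 ≤ D s)
    (hDint : ∀ α β, 0 ≤ α → α ≤ β → β ≤ b → ∫ s in α..β, D s ≤ h)
    (hDzero : ∀ s ∈ Icc 0 (b / 2), D s ≤ 4 * a * h * g)
    (hDb : ∀ s ∈ Icc (b / 2) (b - 4 * h), D s ≤ 2 * a * h * (b - s) ^ (q - 1)) :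
    ∫ s in 0..(b - 4 * h), q * s ^ (q - 1) * D s ≤ 8 * a * r ^ q * g * h + q * r ^ (q - 1) * h := by
  have hb : 0 < b := by linarith
  have hr : 0 < r := by linarith
  have hg : 0 ≤ g := (Real.rpow_nonneg hb.le _).trans hbg
  have hDon : ∀ c d, 0 ≤ c → d ≤ b → ContinuousOn D (Icc c d) := fun c d hc hd =>
    hD.mono (Icc_subset_Icc hc hd)
  have hi : ∀ c d, 0 ≤ c → c ≤ d → d ≤ b →
      IntervalIntegrable (fun s => q * s ^ (q - 1) * D s) volume c d := fun c d hc hcd hd =>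
    intervalIntegrable_kernel_mul hq0 hcd (hDon c d hc hd)
  have hnear_zero : ∀ c, 0 ≤ c → c ≤ b / 2 → c ≤ r →
      ∫ s in 0..c, q * s ^ (q - 1) * D s ≤ 4 * a * r ^ q * g * h := fun c hc hcb hcr => by
    have := integral_kernel_mul_le hq0 hc (hDon 0 c le_rfl (by linarith))
      fun s hs => hDzero s ⟨hs.1, hs.2.trans hcb⟩
    have : c ^ q ≤ r ^ q := Real.rpow_le_rpow hc hcr hq0.le
    nlinarith [mul_nonneg (mul_nonneg ha hh.le) hg]
  have hnear_b : ∀ c, b / 2 ≤ c → b - c ≤ r → c ≤ b - 4 * h →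
      ∫ s in c..(b - 4 * h), q * s ^ (q - 1) * D s ≤ 4 * a * r ^ q * g * h := fun c hbc hcr hc => by
    have := integral_kernel_mul_le_of_le_rpow_sub hq0 hq1 hb (by positivity) hbc hc (by linarith)
      (hDon c _ (by linarith) (by linarith)) fun s hs => hDb s ⟨hbc.trans hs.1, hs.2⟩
    have : (b - c) ^ q ≤ r ^ q := Real.rpow_le_rpow (by linarith) hcr hq0.le
    have := Real.rpow_nonneg (by linarith : 0 ≤ b - c) q
    calc _ ≤ 2 * b ^ (q - 1) * (2 * a * h) * (b - c) ^ q := by assumption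
      _ = 4 * a * h * (b ^ (q - 1) * (b - c) ^ q) := by ring
      _ ≤ 4 * a * h * (g * r ^ q) := by gcongr
      _ = 4 * a * r ^ q * g * h := by ring
  have hmiddle : 0 ≤ q * r ^ (q - 1) * h := by positivity
  rcases le_or_gt b (2 * r) with hbr | hbr
  · rw [← integral_add_adjacent_intervals (hi 0 (b / 2) le_rfl (by linarith) (by linarith))
      (hi (b / 2) (b - 4 * h) (by linarith) (by linarith) (by linarith))]
    linarith [hnear_zero (b / 2) (by linarith) le_rfl (by linarith),
      hnear_b (b / 2) le_rfl (by linarith) (by linarith)]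
  · rw [← integral_add_adjacent_intervals (hi 0 (b - r) le_rfl (by linarith) (by linarith))
      (hi (b - r) (b - 4 * h) (by linarith) (by linarith) (by linarith)),
      ← integral_add_adjacent_intervals (hi 0 r le_rfl (by linarith) (by linarith))
      (hi r (b - r) hr.le (by linarith) (by linarith))]
    have := integral_kernel_mul_le_mul_integral hq0 hq1 hr (by linarith)
      (hDon r (b - r) hr.le (by linarith)) fun s hs => hD0 s ⟨by linarith [hs.1], by linarith [hs.2]⟩
    have := hDint r (b - r) hr.le (by linarith) (by linarith)
    have : q * r ^ (q - 1) * ∫ s in r..(b - r), D s ≤ q * r ^ (q - 1) * h := by gcongr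
    linarith [hnear_zero r hr.le (by linarith) le_rfl, hnear_b (b - r) (by linarith) (by linarith)
      (by linarith)]

section Increment

variable {q L a : ℝ} {G : ℝ → ℝ}

theorem sub_shift_le_of_le_half (hq0 : 0 ≤ q) (hq1 : q ≤ 1) (ha : 0 ≤ a)
    (hGc : ContinuousOn G (Icc (-L) L)) (hGd : DifferentiableOn ℝ G (Ioo (-L) L))
    (hG' : ∀ x, |x| < L → -deriv G x ≤ a * (L - |x|) ^ (q - 1))
    {z h s : ℝ} (hh : 0 < h) (hzh : 8 * h ≤ L - |z|) (hs : s ∈ Icc 0 ((z + L) / 2)) :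
    G (s - (z + h)) - G (s - z) ≤ 4 * a * h * (L - |z|) ^ (q - 1) := by
  obtain ⟨hz1, hz2⟩ := abs_le.1 (le_refl |z|)
  have hdist : |s - z| ≤ (L + |z|) / 2 := abs_sub_le_iff.2 ⟨by linarith [hs.2], by linarith [hs.1]⟩
  have := sub_le_of_neg_deriv_le_rpow hq0 hq1 ha hGc hGd hG' (x := s - z) hh
    (m := (L - |z|) / 2) (by linarith) (by linarith)
  have := rpow_le_two_mul_rpow hq0 hq1 (by linarith) (le_refl ((L - |z|) / 2))
  rw [sub_sub] at *
  nlinarith [mul_nonneg ha hh.le]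

theorem sub_shift_le_of_half_le (hq0 : 0 ≤ q) (hq1 : q ≤ 1) (ha : 0 ≤ a)
    (hGc : ContinuousOn G (Icc (-L) L)) (hGd : DifferentiableOn ℝ G (Ioo (-L) L))
    (hG' : ∀ x, |x| < L → -deriv G x ≤ a * (L - |x|) ^ (q - 1))
    {z h s : ℝ} (hh : 0 < h) (hz : |z| ≤ L) (hs : s ∈ Icc ((z + L) / 2) (z + L - 4 * h)) :
    G (s - (z + h)) - G (s - z) ≤ 2 * a * h * (z + L - s) ^ (q - 1) := by
  have hz' := (abs_le.1 hz).2
  have hdist : |s - z| ≤ s - z := abs_sub_le_iff.2 ⟨le_rfl, by linarith [hs.1]⟩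
  simpa only [sub_sub] using sub_le_of_neg_deriv_le_rpow hq0 hq1 ha hGc hGd hG'
    (x := s - z) hh (m := z + L - s) (by linarith [hs.2]) (by linarith)

theorem integral_kernel_mul_sub_shift_le {r : ℝ} (hq0 : 0 < q) (hq1 : q ≤ 1) (ha : 0 ≤ a)
    (hGc : ContinuousOn G (Icc (-L) L)) (hGd : DifferentiableOn ℝ G (Ioo (-L) L))
    (hGanti : AntitoneOn G (Icc (-L) L)) (hG01 : ∀ t ∈ Icc (-L) L, G t ∈ Icc (0 : ℝ) 1)
    (hG' : ∀ x, |x| < L → -deriv G x ≤ a * (L - |x|) ^ (q - 1))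
    {z h : ℝ} (hh : 0 < h) (hzh : 8 * h ≤ L - |z|) (hrh : 4 * h ≤ r) :
    ∫ s in 0..(z + L), q * s ^ (q - 1) * (G (s - (z + h)) - G (s - z)) ≤
      (2 * q + 8 * a * r ^ q) * (L - |z|) ^ (q - 1) * h + q * r ^ (q - 1) * h := by
  obtain ⟨hz1, hz2⟩ := abs_le.1 (le_refl |z|)
  set g := (L - |z|) ^ (q - 1)
  have hb : 0 < z + L := by linarith
  have hbg : (z + L) ^ (q - 1) ≤ g :=
    Real.rpow_le_rpow_of_nonpos (by linarith) (by linarith) (by linarith)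
  have hg : 0 ≤ g := (Real.rpow_nonneg hb.le _).trans hbg
  set D := fun s => G (s - (z + h)) - G (s - z)
  have hDon : ∀ c d, 0 ≤ c → d ≤ z + L → ContinuousOn D (Icc c d) := fun c d hc hd =>
    (continuousOn_comp_sub_of_Icc hGc (by linarith) (by linarith)).sub
      (continuousOn_comp_sub_of_Icc hGc (by linarith) (by linarith))
  have hD0 : ∀ s ∈ Icc 0 (z + L), 0 ≤ D s := fun s hs => by
    have := hGanti ⟨by linarith [hs.1], by linarith [hs.2]⟩ ⟨by linarith [hs.1], by linarith [hs.2]⟩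
      (by linarith : s - (z + h) ≤ s - z)
    simp only [D]
    linarith
  have hDint : ∀ α β, 0 ≤ α → α ≤ β → β ≤ z + L → ∫ s in α..β, D s ≤ h := fun α β hα hαβ hβ =>
    integral_sub_comp_sub_le hαβ hh.le (hGc.mono (Icc_subset_Icc (by linarith) (by linarith)))
      fun t ht => hG01 t ⟨by linarith [ht.1], by linarith [ht.2]⟩
  have hbody := integral_kernel_mul_le_of_increment_bounds hq0 hq1 ha hh (by linarith) hrh hbg
    (hDon 0 _ le_rfl le_rfl) hD0 hDint
    (fun s hs => sub_shift_le_of_le_half hq0.le hq1 ha hGc hGd hG' hh hzh hs)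
    (fun s hs => sub_shift_le_of_half_le hq0.le hq1 ha hGc hGd hG' hh (by linarith) hs)
  have htail : ∫ s in (z + L - 4 * h)..(z + L), q * s ^ (q - 1) * D s ≤ 2 * q * g * h := by
    have := integral_kernel_mul_le_mul_integral (c := z + L - 4 * h) (d := z + L) hq0 hq1
      (by linarith) (by linarith) (hDon _ _ (by linarith) le_rfl)
      fun s hs => hD0 s ⟨by linarith [hs.1], hs.2⟩
    have := hDint (z + L - 4 * h) (z + L) (by linarith) (by linarith) le_rfl
    have : 0 ≤ ∫ s in (z + L - 4 * h)..(z + L), D s :=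
      intervalIntegral.integral_nonneg (by linarith) fun s hs => hD0 s ⟨by linarith [hs.1], hs.2⟩
    have := rpow_le_two_mul_rpow hq0.le hq1 hb (by linarith : (z + L) / 2 ≤ z + L - 4 * h)
    calc _ ≤ q * (z + L - 4 * h) ^ (q - 1) * ∫ s in (z + L - 4 * h)..(z + L), D s := by
          assumption
      _ ≤ q * (2 * g) * h := by gcongr; linarith
      _ = 2 * q * g * h := by ring
  rw [← integral_add_adjacent_intervals
    (intervalIntegrable_kernel_mul hq0 (by linarith) (hDon 0 (z + L - 4 * h) le_rfl (by linarith)))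
    (intervalIntegrable_kernel_mul hq0 (by linarith) (hDon _ (z + L) (by linarith) le_rfl))]
  linarith

theorem potential_increment_le {r : ℝ} (hq0 : 0 < q) (hq1 : q < 1) (ha : 0 ≤ a)
    (hGc : ContinuousOn G (Icc (-L) L)) (hGd : DifferentiableOn ℝ G (Ioo (-L) L))
    (hGanti : AntitoneOn G (Icc (-L) L)) (hG01 : ∀ t ∈ Icc (-L) L, G t ∈ Icc (0 : ℝ) 1)
    (hG' : ∀ x, |x| < L → -deriv G x ≤ a * (L - |x|) ^ (q - 1))
    {z h : ℝ} (hh : 0 < h) (hzh : 8 * h ≤ L - |z|) (hrh : 4 * h ≤ r) :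
    potential q L G (z + h) - potential q L G z ≤
      (3 * q + 8 * a * r ^ q) * (L - |z|) ^ (q - 1) * h + q * r ^ (q - 1) * h := by
  obtain ⟨hz1, hz2⟩ := abs_le.1 (le_refl |z|)
  have hboundary := integral_kernel_mul_le_of_mem_Icc (c := z + L) (d := z + h + L) hq0 hq1.le
    (by linarith) (by linarith)
    (continuousOn_comp_sub_of_Icc (w := z + h) hGc (by linarith) (by linarith))
    fun s hs => hG01 _ ⟨by linarith [hs.1], by linarith [hs.2]⟩
  have : q * (z + L) ^ (q - 1) * h ≤ q * (L - |z|) ^ (q - 1) * h := by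
    have : (z + L) ^ (q - 1) ≤ (L - |z|) ^ (q - 1) :=
      Real.rpow_le_rpow_of_nonpos (by linarith) (by linarith) (by linarith)
    gcongr
  rw [potential_add_sub_potential hq0 hq1.ne hGc (by linarith) hh.le (by linarith)]
  linarith [integral_kernel_mul_sub_shift_le hq0 hq1.le ha hGc hGd hGanti hG01 hG' hh hzh hrh]

end Increment

theorem stmt_5 (q lam : ℝ) (hq0 : 0 < q) (hq1 : q < 1) (hlam : 0 < lam) :
    ∃ a > (0:ℝ), ∀ G : ℝ → ℝ,
      ContDiffOn ℝ 1 G (Set.Icc (-lam/2) (lam/2)) →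
      AntitoneOn G (Set.Icc (-lam/2) (lam/2)) →
      (∀ t ∈ Set.Icc (-lam/2) (lam/2), G t ∈ Set.Icc (0:ℝ) 1) →
      (∀ z : ℝ, |z| < lam/2 → -(deriv G z) ≤ a * (lam/2 - |z|) ^ (q-1)) →
      ∀ z : ℝ, |z| < lam/2 →
        -(deriv (fun y =>
            Real.exp (-(∫ t in (-lam/2)..(lam/2), q * (max (y + t) 0) ^ (q-1) * G t))) z)
          ≤ a * (lam/2 - |z|) ^ (q-1) := by
  simp only [neg_div]
  set L := lam / 2
  have hL : 0 < L := by positivity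
  -- `r ^ q = 1/16` turns the term `8 a r^q` of `potential_increment_le` into `a / 2`, and the
  -- factor `(r / L)^(q-1)` absorbs `q r^(q-1)` because `(L - |z|)^(q-1) ≥ L^(q-1)`.
  obtain ⟨r, hr, hrq⟩ : ∃ r : ℝ, 0 < r ∧ r ^ q = 1 / 16 :=
    ⟨(1 / 16) ^ q⁻¹, by positivity, Real.rpow_inv_rpow (by norm_num) hq0.ne'⟩
  refine ⟨2 * q * (3 + (r / L) ^ (q - 1)), by positivity, fun G hG hGanti hG01 hG' z hz => ?_⟩
  change -deriv (fun y => Real.exp (-potential q L G y)) z ≤ _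
  have hgz : 0 < L - |z| := by linarith
  refine neg_deriv_le_of_eventually_sub_le (by positivity) ?_
  filter_upwards [Ioo_mem_nhdsGT (show z < z + min ((L - |z|) / 8) (r / 4) from
    lt_add_of_pos_right z (lt_min (by positivity) (by positivity)))]
    with y ⟨hzy, hy⟩
  have hmin := min_le_left ((L - |z|) / 8) (r / 4)
  have hmin' := min_le_right ((L - |z|) / 8) (r / 4)
  have hinc := potential_increment_le hq0 hq1 (by positivity) hG.continuousOn
    ((hG.differentiableOn one_ne_zero).mono Ioo_subset_Icc_self) hGanti hG01 hG'
    (r := r) (z := z) (h := y - z) (by linarith) (by linarith) (by linarith)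
  rw [add_sub_cancel] at hinc
  refine exp_neg_sub_exp_neg_le (potential_nonneg hq0.le hL.le fun t ht => (hG01 t ht).1)
    (by positivity) (hinc.trans ?_)
  have := mul_le_mul_of_nonneg_left
    (rpow_le_div_rpow_mul_rpow (L := L) hq1.le hr hgz (by linarith [abs_nonneg z]))
    (by nlinarith : 0 ≤ q * (y - z))
  rw [hrq]
  linarith
end

section
/- Let 0 < q < 1 and λ > 0. For every ε > 0 there exists M such that for all m ≥ M and all z ≥ -λ/2: ∫_{z}^{∞} ((x + λ/2)^{q-1} + |x - λ/2|^{q-1})·exp(m·(z - x)) dx ≤ ε. -/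
open MeasureTheory Set Real
open scoped ENNReal

-- L1: singularity at left endpoint
lemma aux_lint_left {q : ℝ} (hq0 : 0 < q) (hq1 : q < 1) {a b : ℝ} (hab : a ≤ b) :
    ∫⁻ x in Set.Ioc a b, ENNReal.ofReal ((x - a) ^ (q-1)) ≤ ENNReal.ofReal ((b-a)^q / q) := by
  have hint : IntegrableOn (fun x => (x - a) ^ (q-1)) (Set.Ioc a b) volume := by
    have h := (intervalIntegral.intervalIntegrable_rpow' (a := 0) (b := b - a)
      (show (-1:ℝ) < q - 1 by linarith)).comp_sub_right a
    simpa using h.1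
  have hnn : 0 ≤ᵐ[volume.restrict (Set.Ioc a b)] fun x => (x - a) ^ (q-1) := by
    filter_upwards [ae_restrict_mem measurableSet_Ioc] with x hx
    exact Real.rpow_nonneg (by linarith [hx.1]) _
  rw [← ofReal_integral_eq_lintegral_ofReal hint hnn]
  apply ENNReal.ofReal_le_ofReal
  rw [← intervalIntegral.integral_of_le hab]
  have h1 : (∫ x in a..b, (x - a) ^ (q-1)) = ∫ x in (a-a)..(b-a), x ^ (q-1) :=
    intervalIntegral.integral_comp_sub_right (fun x => x ^ (q-1)) a
  rw [h1, sub_self, integral_rpow (Or.inl (by linarith))]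
  rw [Real.zero_rpow (by linarith : q - 1 + 1 ≠ 0)]
  rw [show q - 1 + 1 = q by ring]
  simp

-- L2: singularity at right endpoint
lemma aux_lint_right {q : ℝ} (hq0 : 0 < q) (hq1 : q < 1) {a b : ℝ} (hab : a ≤ b) :
    ∫⁻ x in Set.Ioc a b, ENNReal.ofReal ((b - x) ^ (q-1)) ≤ ENNReal.ofReal ((b-a)^q / q) := by
  have hint : IntegrableOn (fun x => (b - x) ^ (q-1)) (Set.Ioc a b) volume := by
    have h := (intervalIntegral.intervalIntegrable_rpow' (a := 0) (b := b - a)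
      (show (-1:ℝ) < q - 1 by linarith)).comp_sub_left b
    have h2 := h.2
    simp only [sub_zero, sub_sub_cancel] at h2
    exact h2
  have hnn : 0 ≤ᵐ[volume.restrict (Set.Ioc a b)] fun x => (b - x) ^ (q-1) := by
    filter_upwards [ae_restrict_mem measurableSet_Ioc] with x hx
    exact Real.rpow_nonneg (by linarith [hx.2]) _
  rw [← ofReal_integral_eq_lintegral_ofReal hint hnn]
  apply ENNReal.ofReal_le_ofReal
  rw [← intervalIntegral.integral_of_le hab]
  have h1 : (∫ x in a..b, (b - x) ^ (q-1)) = ∫ x in (b-b)..(b-a), x ^ (q-1) :=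
    intervalIntegral.integral_comp_sub_left (fun x => x ^ (q-1)) b
  rw [h1, sub_self, integral_rpow (Or.inl (by linarith))]
  rw [Real.zero_rpow (by linarith : q - 1 + 1 ≠ 0)]
  rw [show q - 1 + 1 = q by ring]
  simp

lemma aux_lint_abs {q : ℝ} (hq0 : 0 < q) (hq1 : q < 1) {a b c L : ℝ} (hab : a ≤ b)
    (hbL : b - a ≤ L) :
    ∫⁻ x in Set.Ioc a b, ENNReal.ofReal (|x - c| ^ (q-1)) ≤ ENNReal.ofReal (2 * (L^q / q)) := by
  have hL0 : 0 ≤ L := le_trans (by linarith) hbL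
  have hdiv : ∀ u v : ℝ, 0 ≤ u → u ≤ v → u ^ q / q ≤ v ^ q / q := fun u v hu huv =>
    div_le_div_of_nonneg_right (Real.rpow_le_rpow hu huv hq0.le) hq0.le
  have h1 : ∫⁻ x in Set.Ioc a b ∩ Set.Iic c, ENNReal.ofReal (|x - c| ^ (q-1))
      ≤ ENNReal.ofReal (L^q / q) := by
    rw [Set.Ioc_inter_Iic]
    rcases le_or_gt a (b ⊓ c) with h | h
    · calc ∫⁻ x in Set.Ioc a (b ⊓ c), ENNReal.ofReal (|x - c| ^ (q-1))
          = ∫⁻ x in Set.Ioo a (b ⊓ c), ENNReal.ofReal (|x - c| ^ (q-1)) := by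
            rw [MeasureTheory.Measure.restrict_congr_set Ioo_ae_eq_Ioc.symm]
        _ ≤ ∫⁻ x in Set.Ioo a (b ⊓ c), ENNReal.ofReal ((b ⊓ c - x) ^ (q-1)) := by
            apply MeasureTheory.setLIntegral_mono' measurableSet_Ioo
            intro x hx
            apply ENNReal.ofReal_le_ofReal
            have hxbc : x < b ⊓ c := hx.2
            have hxc : x ≤ c := le_trans hxbc.le (min_le_right _ _)
            rw [abs_sub_comm, abs_of_nonneg (by linarith)]
            exact Real.rpow_le_rpow_of_nonpos (by linarith)
              (by linarith [min_le_right b c]) (by linarith)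
        _ ≤ ∫⁻ x in Set.Ioc a (b ⊓ c), ENNReal.ofReal ((b ⊓ c - x) ^ (q-1)) :=
            lintegral_mono_set Set.Ioo_subset_Ioc_self
        _ ≤ ENNReal.ofReal ((b ⊓ c - a)^q / q) := aux_lint_right hq0 hq1 h
        _ ≤ ENNReal.ofReal (L^q / q) := ENNReal.ofReal_le_ofReal
            (hdiv _ _ (by linarith) (by linarith [min_le_left b c]))
    · rw [Set.Ioc_eq_empty (by exact fun h' => absurd h' (not_lt.mpr h.le))]
      simp [div_nonneg (Real.rpow_nonneg hL0 q) hq0.le]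
  have h2 : ∫⁻ x in Set.Ioc a b ∩ Set.Ioi c, ENNReal.ofReal (|x - c| ^ (q-1))
      ≤ ENNReal.ofReal (L^q / q) := by
    rw [Set.Ioc_inter_Ioi]
    rcases le_or_gt (a ⊔ c) b with h | h
    · calc ∫⁻ x in Set.Ioc (a ⊔ c) b, ENNReal.ofReal (|x - c| ^ (q-1))
          = ∫⁻ x in Set.Ioo (a ⊔ c) b, ENNReal.ofReal (|x - c| ^ (q-1)) := by
            rw [MeasureTheory.Measure.restrict_congr_set Ioo_ae_eq_Ioc.symm]
        _ ≤ ∫⁻ x in Set.Ioo (a ⊔ c) b, ENNReal.ofReal ((x - (a ⊔ c)) ^ (q-1)) := by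
            apply MeasureTheory.setLIntegral_mono' measurableSet_Ioo
            intro x hx
            apply ENNReal.ofReal_le_ofReal
            have hxac : a ⊔ c < x := hx.1
            have hxc : c < x := lt_of_le_of_lt (le_max_right _ _) hxac
            rw [abs_of_nonneg (by linarith)]
            exact Real.rpow_le_rpow_of_nonpos (by linarith)
              (by linarith [le_max_right a c]) (by linarith)
        _ ≤ ∫⁻ x in Set.Ioc (a ⊔ c) b, ENNReal.ofReal ((x - (a ⊔ c)) ^ (q-1)) :=
            lintegral_mono_set Set.Ioo_subset_Ioc_self
        _ ≤ ENNReal.ofReal ((b - (a ⊔ c))^q / q) := aux_lint_left hq0 hq1 h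
        _ ≤ ENNReal.ofReal (L^q / q) := ENNReal.ofReal_le_ofReal
            (hdiv _ _ (by linarith) (by linarith [le_max_left a c]))
    · rw [Set.Ioc_eq_empty (by exact fun h' => absurd h' (not_lt.mpr h.le))]
      simp [div_nonneg (Real.rpow_nonneg hL0 q) hq0.le]
  have hsplit : Set.Ioc a b = (Set.Ioc a b ∩ Set.Iic c) ∪ (Set.Ioc a b ∩ Set.Ioi c) := by
    rw [← Set.inter_union_distrib_left, Set.Iic_union_Ioi, Set.inter_univ]
  calc ∫⁻ x in Set.Ioc a b, ENNReal.ofReal (|x - c| ^ (q-1))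
      = ∫⁻ x in (Set.Ioc a b ∩ Set.Iic c) ∪ (Set.Ioc a b ∩ Set.Ioi c),
          ENNReal.ofReal (|x - c| ^ (q-1)) := by rw [← hsplit]
    _ ≤ _ + _ := MeasureTheory.lintegral_union_le _ _ _
    _ ≤ ENNReal.ofReal (L^q / q) + ENNReal.ofReal (L^q / q) := add_le_add h1 h2
    _ = ENNReal.ofReal (2 * (L^q / q)) := by
        rw [← ENNReal.ofReal_add (div_nonneg (Real.rpow_nonneg hL0 q) hq0.le)
          (div_nonneg (Real.rpow_nonneg hL0 q) hq0.le)]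
        ring_nf

theorem stmt_7 (q lam : ℝ) (hq0 : 0 < q) (hq1 : q < 1) (hlam : 0 < lam) :
    ∀ ε > (0:ℝ), ∃ M : ℝ, ∀ m ≥ M, ∀ z ≥ -lam/2,
      (∫ x in Set.Ioi z,
        ((x + lam/2) ^ (q-1) + |x - lam/2| ^ (q-1)) * Real.exp (m * (z - x))) ≤ ε := by
  intro ε hε
  set L : ℝ := (q * ε / 8) ^ q⁻¹ with hLdef
  have hL0 : 0 < L := Real.rpow_pos_of_pos (by positivity) _
  have hLq : L ^ q = q * ε / 8 := Real.rpow_inv_rpow (by positivity) hq0.ne'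
  refine ⟨Real.log 2 / L, fun m hm z hz => ?_⟩
  have hm0 : 0 < m := lt_of_lt_of_le (div_pos (Real.log_pos one_lt_two) hL0) hm
  have hmL : Real.log 2 ≤ m * L := (div_le_iff₀ hL0).mp hm
  have hexp : Real.exp (-(m*L)) ≤ 1/2 := by
    rw [show (1:ℝ)/2 = Real.exp (Real.log (1/2)) from (Real.exp_log (by norm_num)).symm]
    apply Real.exp_le_exp.2
    rw [one_div, Real.log_inv]
    linarith
  set F := fun x : ℝ => ((x + lam/2) ^ (q-1) + |x - lam/2| ^ (q-1)) * Real.exp (m * (z - x))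
    with hFdef
  by_cases hInt : MeasureTheory.IntegrableOn F (Set.Ioi z) volume
  swap
  · rw [MeasureTheory.integral_undef hInt]; exact hε.le
  have hnn : 0 ≤ᵐ[volume.restrict (Set.Ioi z)] F := by
    filter_upwards [ae_restrict_mem measurableSet_Ioi] with x hx
    have h1 : (0:ℝ) ≤ x + lam/2 := by
      simp only [Set.mem_Ioi] at hx
      have : -lam/2 ≤ z := hz
      linarith
    exact mul_nonneg (add_nonneg (Real.rpow_nonneg h1 _)
      (Real.rpow_nonneg (abs_nonneg _) _)) (Real.exp_nonneg _)
  rw [MeasureTheory.integral_eq_lintegral_of_nonneg_ae hnn hInt.1]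
  apply ENNReal.toReal_le_of_le_ofReal hε.le
  have key : ∀ k : ℕ, ∫⁻ x in Set.Ioc (z + k*L) (z + (k+1)*L), ENNReal.ofReal (F x)
      ≤ ENNReal.ofReal (Real.exp (-(m*L))) ^ k * ENNReal.ofReal (ε/2) := by
    intro k
    have hab : z + k*L ≤ z + (k+1)*L := by nlinarith [hL0.le]
    have hmeas1 : Measurable fun x : ℝ => ENNReal.ofReal (|x + lam/2| ^ (q-1)) :=
      (((measurable_id.add_const (lam/2)).abs.pow measurable_const)).ennreal_ofReal
    have step1 : ∫⁻ x in Set.Ioc (z + k*L) (z + (k+1)*L), ENNReal.ofReal (F x)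
        ≤ ∫⁻ x in Set.Ioc (z + k*L) (z + (k+1)*L),
            ENNReal.ofReal (Real.exp (-(m*(k*L)))) *
            (ENNReal.ofReal (|x + lam/2| ^ (q-1)) + ENNReal.ofReal (|x - lam/2| ^ (q-1))) := by
      apply MeasureTheory.setLIntegral_mono' measurableSet_Ioc
      intro x hx
      have hxa : z + k*L < x := hx.1
      have hg0 : (0:ℝ) ≤ |x + lam/2| ^ (q-1) + |x - lam/2| ^ (q-1) :=
        add_nonneg (Real.rpow_nonneg (abs_nonneg _) _) (Real.rpow_nonneg (abs_nonneg _) _)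
      have hfg : (x + lam/2) ^ (q-1) + |x - lam/2| ^ (q-1)
          ≤ |x + lam/2| ^ (q-1) + |x - lam/2| ^ (q-1) := by
        have h1 := Real.abs_rpow_le_abs_rpow (x + lam/2) (q-1)
        have h2 := le_abs_self ((x + lam/2) ^ (q-1))
        linarith
      have hee : Real.exp (m*(z-x)) ≤ Real.exp (-(m*(k*L))) := by
        apply Real.exp_le_exp.2
        nlinarith [hm0.le]
      have hmain : F x ≤ Real.exp (-(m*(k*L))) * (|x + lam/2| ^ (q-1) + |x - lam/2| ^ (q-1)) := by
        have := mul_le_mul hfg hee (Real.exp_nonneg _) hg0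
        simp only [hFdef]
        nlinarith [this]
      calc ENNReal.ofReal (F x)
          ≤ ENNReal.ofReal (Real.exp (-(m*(k*L))) *
              (|x + lam/2| ^ (q-1) + |x - lam/2| ^ (q-1))) := ENNReal.ofReal_le_ofReal hmain
        _ = ENNReal.ofReal (Real.exp (-(m*(k*L)))) *
            (ENNReal.ofReal (|x + lam/2| ^ (q-1)) + ENNReal.ofReal (|x - lam/2| ^ (q-1))) := by
            rw [ENNReal.ofReal_mul (Real.exp_nonneg _),
              ENNReal.ofReal_add (Real.rpow_nonneg (abs_nonneg _) _)
                (Real.rpow_nonneg (abs_nonneg _) _)]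
    have hb1 : ∫⁻ x in Set.Ioc (z + k*L) (z + (k+1)*L), ENNReal.ofReal (|x + lam/2| ^ (q-1))
        ≤ ENNReal.ofReal (2 * (L^q / q)) := by
      have h := aux_lint_abs hq0 hq1 (c := -(lam/2)) hab
        (le_of_eq (by ring : (z + (k+1)*L) - (z + k*L) = L))
      simpa [sub_neg_eq_add] using h
    have hb2 : ∫⁻ x in Set.Ioc (z + k*L) (z + (k+1)*L), ENNReal.ofReal (|x - lam/2| ^ (q-1))
        ≤ ENNReal.ofReal (2 * (L^q / q)) :=
      aux_lint_abs hq0 hq1 (c := lam/2) hab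
        (le_of_eq (by ring : (z + (k+1)*L) - (z + k*L) = L))
    have heq4 : 2 * (L^q / q) = ε/4 := by
      rw [hLq]; field_simp; ring
    have hpow : ENNReal.ofReal (Real.exp (-(m*(k*L)))) = ENNReal.ofReal (Real.exp (-(m*L))) ^ k := by
      rw [show -(m*(k*L)) = (k:ℝ) * (-(m*L)) by ring, Real.exp_nat_mul,
        ENNReal.ofReal_pow (Real.exp_nonneg _)]
    calc ∫⁻ x in Set.Ioc (z + k*L) (z + (k+1)*L), ENNReal.ofReal (F x)
        ≤ ∫⁻ x in Set.Ioc (z + k*L) (z + (k+1)*L),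
            ENNReal.ofReal (Real.exp (-(m*(k*L)))) *
            (ENNReal.ofReal (|x + lam/2| ^ (q-1)) + ENNReal.ofReal (|x - lam/2| ^ (q-1))) := step1
      _ = ENNReal.ofReal (Real.exp (-(m*(k*L)))) *
          ((∫⁻ x in Set.Ioc (z + k*L) (z + (k+1)*L), ENNReal.ofReal (|x + lam/2| ^ (q-1))) +
           (∫⁻ x in Set.Ioc (z + k*L) (z + (k+1)*L), ENNReal.ofReal (|x - lam/2| ^ (q-1)))) := by
          rw [MeasureTheory.lintegral_const_mul' _ _ ENNReal.ofReal_ne_top,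
            MeasureTheory.lintegral_add_left hmeas1]
      _ ≤ ENNReal.ofReal (Real.exp (-(m*(k*L)))) *
          (ENNReal.ofReal (2 * (L^q / q)) + ENNReal.ofReal (2 * (L^q / q))) :=
          mul_le_mul_right (add_le_add hb1 hb2) _
      _ = ENNReal.ofReal (Real.exp (-(m*L))) ^ k * ENNReal.ofReal (ε/2) := by
          rw [hpow, ← ENNReal.ofReal_add (by rw [heq4]; positivity) (by rw [heq4]; positivity),
            heq4, show ε/4 + ε/4 = ε/2 by ring]
  have cover : Set.Ioi z ⊆ ⋃ k : ℕ, Set.Ioc (z + k*L) (z + (k+1)*L) := by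
    intro x hx
    simp only [Set.mem_Ioi] at hx
    have hs : 0 < (x - z)/L := div_pos (by linarith) hL0
    have hc1 : 0 < ⌈(x-z)/L⌉₊ := Nat.ceil_pos.mpr hs
    refine Set.mem_iUnion.2 ⟨⌈(x-z)/L⌉₊ - 1, ?_⟩
    constructor
    · have h1 : ((⌈(x-z)/L⌉₊ - 1 : ℕ) : ℝ) < (x-z)/L := Nat.lt_ceil.mp (by omega)
      have := (lt_div_iff₀ hL0).mp h1
      linarith
    · have h2 : (x-z)/L ≤ (((⌈(x-z)/L⌉₊ - 1 : ℕ) : ℝ) + 1) := by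
        have h3 : ((⌈(x-z)/L⌉₊ - 1 : ℕ) : ℝ) = (⌈(x-z)/L⌉₊ : ℝ) - 1 := by
          rw [Nat.cast_sub hc1]; simp
        rw [h3]
        linarith [Nat.le_ceil ((x-z)/L)]
      have := (div_le_iff₀ hL0).mp h2
      linarith
  calc ∫⁻ x in Set.Ioi z, ENNReal.ofReal (F x)
      ≤ ∫⁻ x in ⋃ k : ℕ, Set.Ioc (z + k*L) (z + (k+1)*L), ENNReal.ofReal (F x) :=
        MeasureTheory.lintegral_mono_set cover
    _ ≤ ∑' k : ℕ, ∫⁻ x in Set.Ioc (z + k*L) (z + (k+1)*L), ENNReal.ofReal (F x) :=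
        MeasureTheory.lintegral_iUnion_le _ _
    _ ≤ ∑' k : ℕ, ENNReal.ofReal (Real.exp (-(m*L))) ^ k * ENNReal.ofReal (ε/2) :=
        ENNReal.tsum_le_tsum key
    _ = (1 - ENNReal.ofReal (Real.exp (-(m*L))))⁻¹ * ENNReal.ofReal (ε/2) := by
        rw [ENNReal.tsum_mul_right, ENNReal.tsum_geometric]
    _ ≤ 2 * ENNReal.ofReal (ε/2) := by
        apply mul_le_mul_left
        have hr : ENNReal.ofReal (Real.exp (-(m*L))) ≤ 2⁻¹ := by
          have h := ENNReal.ofReal_le_ofReal hexp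
          rw [show (1:ℝ)/2 = (2:ℝ)⁻¹ by norm_num, ENNReal.ofReal_inv_of_pos two_pos,
            ENNReal.ofReal_ofNat] at h
          exact h
        calc (1 - ENNReal.ofReal (Real.exp (-(m*L))))⁻¹ ≤ (1 - 2⁻¹)⁻¹ :=
              ENNReal.inv_le_inv' (tsub_le_tsub_left hr 1)
          _ = 2 := by rw [ENNReal.one_sub_inv_two]; simp
    _ = ENNReal.ofReal ε := by
        rw [show (2:ℝ≥0∞) = ENNReal.ofReal 2 from (ENNReal.ofReal_ofNat 2).symm,
          ← ENNReal.ofReal_mul (by norm_num), show 2 * (ε/2) = ε by ring]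
end

section
/- Let 0 < q < 1, λ > 0, and let F : [-λ/2, λ/2] → ℝ be C¹ with |F'| bounded by K on a closed subinterval I ⊂ (-λ/2, λ/2) and |F'| integrable against t ↦ (y+t)^{q-2} away from the pole. Then the function z ↦ ∫_{-z}^{λ/2} q·(z+t)^{q-1}·F'(t) dt is continuous on the interior of I; more precisely, for x < y in I with y - x small, the difference of the integrals at x and y is O(|x - y|^{q/2}). -/
/-!
Write `k_z t = q (z + t)^(q-1)`, so the integral is `G z = ∫_{-z}^L k_z f` with `|f| ≤ K`.
For `x ≤ y`, `G x - G y = ∫_{-x}^L (k_x - k_y) f - ∫_{-y}^{-x} k_y f`, and `k_x ≥ k_y` on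
`(-x, L]` because `q - 1 < 0`. Bounding `f` by `K` leaves explicit integrals of nonnegative
kernels, each at most `(y - x)^q` (the first because `(x + L)^q ≤ (y + L)^q`). So `G` is
`q`-Hölder with constant `2K`, which gives the `q/2` bound for `|x - y| ≤ 1` without splitting
the integral at `-x + √|x - y|`.
-/

open MeasureTheory Set
open scoped NNReal

theorem HolderOnWith.of_dist_le {X Y : Type*} [PseudoMetricSpace X] [PseudoMetricSpace Y]
    {C r : ℝ≥0} {f : X → Y} {s : Set X}
    (h : ∀ x ∈ s, ∀ y ∈ s, dist (f x) (f y) ≤ C * dist x y ^ (r : ℝ)) :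
    HolderOnWith C r f s := by
  intro x hx y hy
  rw [edist_dist, edist_dist, ENNReal.ofReal_rpow_of_nonneg dist_nonneg r.coe_nonneg,
    ← ENNReal.ofReal_coe_nnreal, ← ENNReal.ofReal_mul C.coe_nonneg]
  exact ENNReal.ofReal_le_ofReal (h x hx y hy)

section BoundedFactor

variable {f g : ℝ → ℝ} {u v K : ℝ}

theorem IntervalIntegrable.mul_of_abs_le (huv : u ≤ v) (hg : IntervalIntegrable g volume u v)
    (hf : AEStronglyMeasurable f volume) (hK : ∀ t ∈ Ioc u v, |f t| ≤ K) :
    IntervalIntegrable (fun t => g t * f t) volume u v := by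
  rw [intervalIntegrable_iff_integrableOn_Ioc_of_le huv] at hg ⊢
  exact hg.mul_bdd hf.restrict ((ae_restrict_iff' measurableSet_Ioc).2 (ae_of_all _ hK))

theorem abs_integral_mul_le_of_abs_le (huv : u ≤ v) (hg : IntervalIntegrable g volume u v)
    (hg0 : ∀ t ∈ Ioc u v, 0 ≤ g t) (hK : ∀ t ∈ Ioc u v, |f t| ≤ K) :
    |∫ t in u..v, g t * f t| ≤ K * ∫ t in u..v, g t := by
  rw [← Real.norm_eq_abs, ← intervalIntegral.integral_const_mul]
  refine intervalIntegral.norm_integral_le_of_norm_le huv (ae_of_all _ fun t ht => ?_)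
    (hg.const_mul K)
  rw [norm_mul, Real.norm_eq_abs, Real.norm_eq_abs, abs_of_nonneg (hg0 t ht), mul_comm K]
  exact mul_le_mul_of_nonneg_left (hK t ht) (hg0 t ht)

end BoundedFactor

section PowerKernel

variable {q : ℝ}

theorem integral_mul_add_rpow_sub_one (hq : 0 < q) (z u v : ℝ) :
    ∫ t in u..v, q * (z + t) ^ (q - 1) = (z + v) ^ q - (z + u) ^ q := by
  rw [intervalIntegral.integral_const_mul,
    intervalIntegral.integral_comp_add_left (fun s => s ^ (q - 1)),
    integral_rpow (Or.inl (by linarith)), sub_add_cancel]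
  field_simp

theorem intervalIntegrable_mul_add_rpow_sub_one (hq : 0 < q) (z u v : ℝ) :
    IntervalIntegrable (fun t => q * (z + t) ^ (q - 1)) volume u v := by
  have h := (intervalIntegral.intervalIntegrable_rpow' (r := q - 1) (a := z + u) (b := z + v)
    (by linarith)).comp_add_left z
  simpa using h.const_mul q

end PowerKernel

noncomputable def powerKernelIntegral (q L : ℝ) (f : ℝ → ℝ) (z : ℝ) : ℝ :=
  ∫ t in (-z)..L, q * (z + t) ^ (q - 1) * f t

section PowerKernelIntegral

variable {q L K : ℝ} {f : ℝ → ℝ}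

theorem abs_powerKernelIntegral_sub_le (hq0 : 0 < q) (hq1 : q < 1)
    (hf : AEStronglyMeasurable f volume) (hK : ∀ t ∈ Icc (-L) L, |f t| ≤ K)
    {x y : ℝ} (hx : -L ≤ x) (hxy : x ≤ y) (hy : y ≤ L) :
    |powerKernelIntegral q L f x - powerKernelIntegral q L f y| ≤ 2 * K * (y - x) ^ q := by
  have hk := intervalIntegrable_mul_add_rpow_sub_one hq0
  have hKx : ∀ t ∈ Ioc (-x) L, |f t| ≤ K := fun t ht => hK t ⟨by linarith [ht.1], ht.2⟩
  have hKy : ∀ t ∈ Ioc (-y) (-x), |f t| ≤ K := fun t ht =>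
    hK t ⟨by linarith [ht.1], by linarith [ht.2]⟩
  have hkx_ge_ky : ∀ t ∈ Ioc (-x) L, 0 ≤ q * (x + t) ^ (q - 1) - q * (y + t) ^ (q - 1) :=
    fun t ht => by
      rw [← mul_sub]
      exact mul_nonneg hq0.le (sub_nonneg.2 (Real.rpow_le_rpow_of_nonpos (by linarith [ht.1])
        (by linarith) (by linarith)))
  have hnear : |∫ t in (-y)..(-x), q * (y + t) ^ (q - 1) * f t| ≤ K * (y - x) ^ q := by
    have h := abs_integral_mul_le_of_abs_le (by linarith) (hk y _ _)
      (fun t ht => mul_nonneg hq0.le (Real.rpow_nonneg (by linarith [ht.1]) _)) hKy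
    rwa [integral_mul_add_rpow_sub_one hq0, add_neg_cancel, Real.zero_rpow hq0.ne', sub_zero,
      ← sub_eq_add_neg] at h
  have hfar : |∫ t in (-x)..L, (q * (x + t) ^ (q - 1) - q * (y + t) ^ (q - 1)) * f t|
      ≤ K * (y - x) ^ q := by
    calc _ ≤ K * ∫ t in (-x)..L, (q * (x + t) ^ (q - 1) - q * (y + t) ^ (q - 1)) :=
          abs_integral_mul_le_of_abs_le (by linarith) ((hk x _ _).sub (hk y _ _)) hkx_ge_ky hKx
      _ = K * ((x + L) ^ q - (y + L) ^ q + (y - x) ^ q) := by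
          rw [intervalIntegral.integral_sub (hk x _ _) (hk y _ _),
            integral_mul_add_rpow_sub_one hq0, integral_mul_add_rpow_sub_one hq0, add_neg_cancel,
            Real.zero_rpow hq0.ne', ← sub_eq_add_neg]
          ring
      _ ≤ K * (y - x) ^ q := by
          have : (x + L) ^ q ≤ (y + L) ^ q := Real.rpow_le_rpow (by linarith) (by linarith) hq0.le
          have hK0 : 0 ≤ K := (abs_nonneg _).trans (hK L ⟨by linarith, le_rfl⟩)
          nlinarith
  have hsplit : powerKernelIntegral q L f x - powerKernelIntegral q L f y
      = (∫ t in (-x)..L, (q * (x + t) ^ (q - 1) - q * (y + t) ^ (q - 1)) * f t)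
        - ∫ t in (-y)..(-x), q * (y + t) ^ (q - 1) * f t := by
    have hIx := (hk x (-x) L).mul_of_abs_le (by linarith) hf hKx
    have hIy := (hk y (-x) L).mul_of_abs_le (by linarith) hf hKx
    have hIy' := (hk y (-y) (-x)).mul_of_abs_le (by linarith) hf hKy
    simp only [powerKernelIntegral, sub_mul]
    rw [← intervalIntegral.integral_add_adjacent_intervals hIy' hIy,
      intervalIntegral.integral_sub hIx hIy]
    ring
  rw [hsplit]
  calc _ ≤ _ := abs_sub _ _
    _ ≤ 2 * K * (y - x) ^ q := by linarith

theorem holderOnWith_powerKernelIntegral {K : ℝ≥0} (hq0 : 0 < q) (hq1 : q < 1)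
    (hf : AEStronglyMeasurable f volume) (hK : ∀ t ∈ Icc (-L) L, |f t| ≤ K) :
    HolderOnWith (2 * K) ⟨q, hq0.le⟩ (powerKernelIntegral q L f) (Icc (-L) L) := by
  have hle : ∀ x ∈ Icc (-L) L, ∀ y ∈ Icc (-L) L, x ≤ y →
      dist (powerKernelIntegral q L f x) (powerKernelIntegral q L f y)
        ≤ 2 * K * dist x y ^ q := by
    intro x hx y hy hxy
    rw [Real.dist_eq, Real.dist_eq, abs_sub_comm x, abs_of_nonneg (sub_nonneg.2 hxy)]
    exact abs_powerKernelIntegral_sub_le hq0 hq1 hf hK hx.1 hxy hy.2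
  refine HolderOnWith.of_dist_le fun x hx y hy => ?_
  push_cast
  rcases le_total x y with hxy | hyx
  · exact hle x hx y hy hxy
  · rw [dist_comm, dist_comm x]
    exact hle y hy x hx hyx

end PowerKernelIntegral

theorem stmt_15_general (q lam : ℝ) (hq0 : 0 < q) (hq1 : q < 1)
    (a b : ℝ) (hab : a ≤ b) (ha : -lam/2 < a) (hb : b < lam/2)
    (F : ℝ → ℝ)
    (K : ℝ) (hK : ∀ t ∈ Set.Icc (-lam/2) (lam/2), |deriv F t| ≤ K) :
    ContinuousOn (fun z => ∫ t in (-z)..(lam/2), q * (z + t) ^ (q-1) * deriv F t)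
        (Set.Ioo a b) ∧
    ∃ C > (0:ℝ), ∃ ε₀ > (0:ℝ), ∀ x y : ℝ, a ≤ x → x < y → y ≤ b → y - x ≤ ε₀ →
      |(∫ t in (-x)..(lam/2), q * (x + t) ^ (q-1) * deriv F t)
        - ∫ t in (-y)..(lam/2), q * (y + t) ^ (q-1) * deriv F t|
        ≤ C * |x - y| ^ (q/2) := by
  lift K to ℝ≥0 using (abs_nonneg _).trans (hK a ⟨ha.le, hab.trans hb.le⟩)
  rw [neg_div] at hK
  have hG := holderOnWith_powerKernelIntegral hq0 hq1 (measurable_deriv F).aestronglyMeasurable hK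
  have hI : Icc a b ⊆ Icc (-(lam / 2)) (lam / 2) := Icc_subset_Icc (by linarith) hb.le
  refine ⟨(hG.continuousOn hq0).mono (Ioo_subset_Icc_self.trans hI), 2 * K + 1, by positivity,
    1, one_pos, fun x y hax hxy hyb hyx => ?_⟩
  have hxy1 : |x - y| ≤ 1 := by rwa [abs_sub_comm, abs_of_pos (sub_pos.2 hxy)]
  have hHolder := hG.dist_le (hI ⟨hax, hxy.le.trans hyb⟩) (hI ⟨hax.trans hxy.le, hyb⟩)
  rw [Real.dist_eq, Real.dist_eq] at hHolder
  calc _ ≤ 2 * K * |x - y| ^ q := hHolder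
    _ ≤ (2 * K + 1) * |x - y| ^ (q / 2) := by
        refine mul_le_mul (by linarith) ?_ (by positivity) (by positivity)
        exact Real.rpow_le_rpow_of_exponent_ge' (abs_nonneg _) hxy1 (by positivity) (by linarith)

theorem stmt_15 (q lam : ℝ) (hq0 : 0 < q) (hq1 : q < 1) (hlam : 0 < lam)
    (a b : ℝ) (hab : a ≤ b) (ha : -lam/2 < a) (hb : b < lam/2)
    (F : ℝ → ℝ) (hF : ContDiffOn ℝ 1 F (Set.Icc (-lam/2) (lam/2)))
    (K : ℝ) (hK : ∀ t ∈ Set.Icc (-lam/2) (lam/2), |deriv F t| ≤ K)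
    (hInt : ∀ y ∈ Set.Icc a b, ∀ ε ∈ Set.Ioo (0:ℝ) 1,
      MeasureTheory.IntegrableOn (fun t => (y + t) ^ (q-2) * |deriv F t|)
        (Set.Icc (-y + ε) (lam/2)) MeasureTheory.volume) :
    ContinuousOn (fun z => ∫ t in (-z)..(lam/2), q * (z + t) ^ (q-1) * deriv F t)
        (Set.Ioo a b) ∧
    ∃ C > (0:ℝ), ∃ ε₀ > (0:ℝ), ∀ x y : ℝ, a ≤ x → x < y → y ≤ b → y - x ≤ ε₀ →
      |(∫ t in (-x)..(lam/2), q * (x + t) ^ (q-1) * deriv F t)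
        - ∫ t in (-y)..(lam/2), q * (y + t) ^ (q-1) * deriv F t|
        ≤ C * |x - y| ^ (q/2) :=
  stmt_15_general q lam hq0 hq1 a b hab ha hb F K hK
end

section
/- Let 0 < q < 1, λ > 0, and a > 0, and suppose G : [-λ/2, λ/2] → [0,1] is C¹ and non-increasing with -G'(t) ≤ a·(λ/2 - |t|)^{q-1} for |t| < λ/2. Then there is a constant α > 0 (depending on q, λ, a) such that for all z with -λ/2 < z < λ/2: -∫_{-z}^{λ/2} q·(z+t)^{q-1}·G'(t) dt ≤ α·max((z + λ/2)^{2q-1}, (λ/2 - z)^{q-1}). -/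
open intervalIntegral MeasureTheory Real Set

/-!
Write `L = z + lam/2`, `c = lam/2 - z`, and for `t ∈ (-z, lam/2)` put `u = z + t`,
`v = lam/2 - t`, so `u + v = L`. Since `lam/2 - |t| ≥ min v c`, the derivative bound gives
`-G' t ≤ a (v^(q-1) + c^(q-1))`. One of `u, v` is at least `L/2`, so
`u^(q-1) v^(q-1) ≤ (L/2)^(q-1) (u^(q-1) + v^(q-1))`. Both `u^(q-1)` and `v^(q-1)` integrate
to `L^q / q`, hence the integral is at most `a (2^(2-q) L^(2q-1) + c^(q-1) L^q)`, and
`L^q ≤ lam^q`.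
-/

theorem rpow_mul_rpow_le_midpoint_rpow_mul_add {p u v : ℝ} (hp : p ≤ 0) (hu : 0 < u)
    (hv : 0 < v) : u ^ p * v ^ p ≤ ((u + v) / 2) ^ p * (u ^ p + v ^ p) := by
  wlog huv : u ≤ v generalizing u v
  · have := this hv hu (not_le.mp huv).le
    rwa [mul_comm, add_comm v, add_comm (v ^ p)] at this
  have hv_le : v ^ p ≤ ((u + v) / 2) ^ p :=
    rpow_le_rpow_of_nonpos (by positivity) (by linarith) hp
  have hu0 : 0 ≤ u ^ p := rpow_nonneg hu.le p
  have hmid0 : 0 ≤ ((u + v) / 2) ^ p * v ^ p := by positivity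
  nlinarith [mul_le_mul_of_nonneg_left hv_le hu0]

theorem integral_rpow_dist_lower {p : ℝ} (hp : -1 < p) (c b : ℝ) :
    ∫ t in -c..b, (c + t) ^ p = (c + b) ^ (p + 1) / (p + 1) := by
  rw [integral_comp_add_left (· ^ p), integral_rpow (Or.inl hp), add_neg_cancel,
    zero_rpow (by linarith), sub_zero]

theorem integral_rpow_dist_upper {p : ℝ} (hp : -1 < p) (a b : ℝ) :
    ∫ t in a..b, (b - t) ^ p = (b - a) ^ (p + 1) / (p + 1) := by
  rw [integral_comp_sub_left (· ^ p), integral_rpow (Or.inl hp), sub_self,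
    zero_rpow (by linarith), sub_zero]

namespace SingularWeight

variable {q lam a z : ℝ} {f : ℝ → ℝ}

theorem integrand_le (hq1 : q < 1) (ha : 0 ≤ a)
    (hf : ∀ t, |t| < lam / 2 → f t ≤ a * (lam / 2 - |t|) ^ (q - 1)) (hz : z < lam / 2)
    {t : ℝ} (ht : t ∈ Ioo (-z) (lam / 2)) :
    (z + t) ^ (q - 1) * f t ≤
      a * (((z + lam / 2) / 2) ^ (q - 1) + (lam / 2 - z) ^ (q - 1)) * (z + t) ^ (q - 1)
        + a * ((z + lam / 2) / 2) ^ (q - 1) * (lam / 2 - t) ^ (q - 1) := by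
  obtain ⟨ht₁, ht₂⟩ := ht
  have hp : q - 1 ≤ 0 := by linarith
  have hu : 0 < z + t := by linarith
  have hv : 0 < lam / 2 - t := by linarith
  have hc : 0 < lam / 2 - z := by linarith
  have hdist :
      (lam / 2 - |t|) ^ (q - 1) ≤ (lam / 2 - t) ^ (q - 1) + (lam / 2 - z) ^ (q - 1) := by
    rcases le_or_gt 0 t with h0 | h0
    · rw [abs_of_nonneg h0]
      linarith [rpow_nonneg hc.le (q - 1)]
    · rw [abs_of_neg h0, sub_neg_eq_add]
      have hct : lam / 2 - z ≤ lam / 2 + t := by linarith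
      linarith [rpow_nonneg hv.le (q - 1), rpow_le_rpow_of_nonpos hc hct hp]
  have hmid := rpow_mul_rpow_le_midpoint_rpow_mul_add hp hu hv
  rw [show z + t + (lam / 2 - t) = z + lam / 2 by ring] at hmid
  have hu0 : 0 ≤ (z + t) ^ (q - 1) := rpow_nonneg hu.le _
  have hft : f t ≤ a * ((lam / 2 - t) ^ (q - 1) + (lam / 2 - z) ^ (q - 1)) :=
    (hf t (abs_lt.mpr ⟨by linarith, ht₂⟩)).trans (mul_le_mul_of_nonneg_left hdist ha)
  calc (z + t) ^ (q - 1) * f t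
      ≤ (z + t) ^ (q - 1) * (a * ((lam / 2 - t) ^ (q - 1) + (lam / 2 - z) ^ (q - 1))) :=
        mul_le_mul_of_nonneg_left hft hu0
    _ = a * ((z + t) ^ (q - 1) * (lam / 2 - t) ^ (q - 1))
          + a * (lam / 2 - z) ^ (q - 1) * (z + t) ^ (q - 1) := by ring
    _ ≤ _ := by linear_combination mul_le_mul_of_nonneg_left hmid ha

theorem integral_le (hq0 : 0 < q) (hq1 : q < 1) (ha : 0 ≤ a)
    (hf : ∀ t, |t| < lam / 2 → f t ≤ a * (lam / 2 - |t|) ^ (q - 1))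
    (hz₁ : -lam / 2 < z) (hz₂ : z < lam / 2) :
    ∫ t in -z..lam / 2, q * (z + t) ^ (q - 1) * f t ≤
      a * (2 * ((z + lam / 2) / 2) ^ (q - 1) + (lam / 2 - z) ^ (q - 1)) * (z + lam / 2) ^ q := by
  have hp : -1 < q - 1 := by linarith
  have hL : 0 < z + lam / 2 := by linarith
  have hc : 0 < lam / 2 - z := by linarith
  set A := a * (((z + lam / 2) / 2) ^ (q - 1) + (lam / 2 - z) ^ (q - 1))
  set B := a * ((z + lam / 2) / 2) ^ (q - 1)
  by_cases hint : IntervalIntegrable (fun t ↦ q * (z + t) ^ (q - 1) * f t) volume (-z) (lam / 2)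
  swap
  · rw [integral_undef hint]
    positivity
  have hu : IntervalIntegrable (fun t ↦ (z + t) ^ (q - 1)) volume (-z) (lam / 2) := by
    simpa using (intervalIntegrable_rpow' hp (a := 0) (b := z + lam / 2)).comp_add_left z
  have hv : IntervalIntegrable (fun t ↦ (lam / 2 - t) ^ (q - 1)) volume (-z) (lam / 2) := by
    simpa using (intervalIntegrable_rpow' hp (a := z + lam / 2) (b := 0)).comp_sub_left (lam / 2)
  have hIu := integral_rpow_dist_lower hp z (lam / 2)
  have hIv := integral_rpow_dist_upper hp (-z) (lam / 2)
  rw [sub_neg_eq_add, add_comm (lam / 2)] at hIv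
  calc ∫ t in -z..lam / 2, q * (z + t) ^ (q - 1) * f t
      ≤ ∫ t in -z..lam / 2, q * (A * (z + t) ^ (q - 1) + B * (lam / 2 - t) ^ (q - 1)) := by
        refine integral_mono_on_of_le_Ioo (by linarith) hint
          (((hu.const_mul A).add (hv.const_mul B)).const_mul q) fun t ht ↦ ?_
        rw [mul_assoc]
        exact mul_le_mul_of_nonneg_left (integrand_le hq1 ha hf hz₂ ht) hq0.le
    _ = (A + B) * (z + lam / 2) ^ q := by
        rw [intervalIntegral.integral_const_mul, integral_add (hu.const_mul A) (hv.const_mul B),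
          intervalIntegral.integral_const_mul, intervalIntegral.integral_const_mul, hIu, hIv,
          sub_add_cancel]
        field_simp
    _ = _ := by ring

end SingularWeight

theorem stmt_17_general (q lam a : ℝ) (hq0 : 0 < q) (hq1 : q < 1) (hlam : 0 < lam) (ha : 0 < a)
    (G : ℝ → ℝ)
    (hG' : ∀ t : ℝ, |t| < lam/2 → -(deriv G t) ≤ a * (lam/2 - |t|) ^ (q-1)) :
    ∃ α > (0:ℝ), ∀ z : ℝ, -lam/2 < z → z < lam/2 →
      -(∫ t in (-z)..(lam/2), q * (z + t) ^ (q-1) * deriv G t)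
        ≤ α * max ((z + lam/2) ^ (2*q - 1)) ((lam/2 - z) ^ (q-1)) := by
  refine ⟨a * (2 ^ (2 - q) + lam ^ q), by positivity, fun z hz₁ hz₂ ↦ ?_⟩
  have hL : 0 < z + lam / 2 := by linarith
  have hint := SingularWeight.integral_le hq0 hq1 ha.le hG' hz₁ hz₂
  simp only [mul_neg, intervalIntegral.integral_neg] at hint
  refine hint.trans ?_
  have hmid : 2 * ((z + lam / 2) / 2) ^ (q - 1) * (z + lam / 2) ^ q
      = 2 ^ (2 - q) * (z + lam / 2) ^ (2 * q - 1) := by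
    rw [div_rpow hL.le zero_le_two, show 2 * q - 1 = q - 1 + q by ring, rpow_add hL,
      show (2 : ℝ) - q = 1 - (q - 1) by ring, rpow_sub zero_lt_two 1 (q - 1), rpow_one]
    ring
  calc a * (2 * ((z + lam / 2) / 2) ^ (q - 1) + (lam / 2 - z) ^ (q - 1)) * (z + lam / 2) ^ q
      = a * (2 ^ (2 - q) * (z + lam / 2) ^ (2 * q - 1)
          + (z + lam / 2) ^ q * (lam / 2 - z) ^ (q - 1)) := by rw [← hmid]; ring
    _ ≤ a * (2 ^ (2 - q) * max ((z + lam / 2) ^ (2 * q - 1)) ((lam / 2 - z) ^ (q - 1))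
          + lam ^ q * max ((z + lam / 2) ^ (2 * q - 1)) ((lam / 2 - z) ^ (q - 1))) := by
        have hc : 0 ≤ (lam / 2 - z) ^ (q - 1) := rpow_nonneg (by linarith) _
        gcongr
        · exact le_max_left _ _
        · linarith
        · exact le_max_right _ _
    _ = _ := by ring

theorem stmt_17 (q lam a : ℝ) (hq0 : 0 < q) (hq1 : q < 1) (hlam : 0 < lam) (ha : 0 < a)
    (G : ℝ → ℝ)
    (hG : ContDiffOn ℝ 1 G (Set.Icc (-lam/2) (lam/2)))
    (hGanti : AntitoneOn G (Set.Icc (-lam/2) (lam/2)))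
    (hGval : ∀ t ∈ Set.Icc (-lam/2) (lam/2), G t ∈ Set.Icc (0:ℝ) 1)
    (hG' : ∀ t : ℝ, |t| < lam/2 → -(deriv G t) ≤ a * (lam/2 - |t|) ^ (q-1)) :
    ∃ α > (0:ℝ), ∀ z : ℝ, -lam/2 < z → z < lam/2 →
      -(∫ t in (-z)..(lam/2), q * (z + t) ^ (q-1) * deriv G t)
        ≤ α * max ((z + lam/2) ^ (2*q - 1)) ((lam/2 - z) ^ (q-1)) :=
  stmt_17_general q lam a hq0 hq1 hlam ha G hG'
end
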